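/- arXiv:2503.20529 — 7 statements merged into one kernel-verified Lean document; each statement's English description precedes it below -/
import Mathlib

section
/- If for some integer k > 1, some real β ∈ (1, k) and some ω > 0 the inequality β(1 + ω) ≤ k holds, then in the (β, ω, k)-blocking game on the infinite k-ary tree, Bob has a winning strategy: there is a strategy producing an infinite path that never enters a forbidden vertex, no matter how Alice plays. -/
/-!
Bob keeps small the potential `threat h`: the total weight, seen from his position `h`, of the
forbidden vertices in the subtree below `h`. Stepping to a child multiplies the weight of a vertex
by `β` and sends it to exactly one child's subtree, so after Alice adds weight at most `ω` the
potentials of the `k` children sum to at most `β (threat h + ω)`. For `C = β ω / (k - β)` we have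
`β (C + ω) = k C`, hence `threat h < C` is inherited by some child. As `β (1 + ω) ≤ k` gives
`C ≤ 1`, while a forbidden vertex at Bob's own position has weight `1`, Bob is never caught.
-/

/-- The history of Bob's first `n` moves, as a vertex of the `k`-ary tree. -/
def BobPos {k : ℕ} (pos : ℕ → Fin k) (n : ℕ) : List (Fin k) :=
  List.ofFn (fun i : Fin n => pos i)

open Finset

namespace BlockingGame

variable {α : Type*}

noncomputable def weight (β : ℝ) (h v : List α) : ℝ :=
  β ^ (-((v.length : ℤ) - (h.length : ℤ)))

lemma weight_pos {β : ℝ} (hβ : 0 < β) (h v : List α) : 0 < weight β h v :=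
  zpow_pos hβ _

lemma weight_self (β : ℝ) (h : List α) : weight β h h = 1 := by
  simp [weight]

lemma weight_eq_zpow_mul {β : ℝ} (hβ : β ≠ 0) (g h v : List α) :
    weight β h v = β ^ ((h.length : ℤ) - g.length) * weight β g v := by
  rw [weight, weight, ← zpow_add₀ hβ]
  ring_nf

lemma weight_append_singleton {β : ℝ} (hβ : β ≠ 0) (h v : List α) (c : α) :
    weight β (h ++ [c]) v = β * weight β h v := by
  rw [weight_eq_zpow_mul hβ h]
  simp

open scoped Classical in
noncomputable def subtreeWeight (β : ℝ) (h v : List α) : ℝ :=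
  if h <+: v then weight β h v else 0

lemma subtreeWeight_nonneg {β : ℝ} (hβ : 0 < β) (h v : List α) : 0 ≤ subtreeWeight β h v := by
  unfold subtreeWeight
  split_ifs
  exacts [(weight_pos hβ h v).le, le_rfl]

lemma subtreeWeight_le_weight {β : ℝ} (hβ : 0 < β) (h v : List α) :
    subtreeWeight β h v ≤ weight β h v := by
  unfold subtreeWeight
  split_ifs
  exacts [le_rfl, (weight_pos hβ h v).le]

lemma eq_of_append_singleton_prefix {h v : List α} {c c' : α}
    (hc : h ++ [c] <+: v) (hc' : h ++ [c'] <+: v) : c = c' := by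
  rw [List.prefix_iff_eq_take] at hc hc'
  simp only [List.length_append, List.length_singleton] at hc hc'
  simpa using hc.trans hc'.symm

lemma sum_subtreeWeight_append_singleton_le [Fintype α] {β : ℝ} (hβ : 0 < β)
    (h v : List α) : ∑ c, subtreeWeight β (h ++ [c]) v ≤ β * subtreeWeight β h v := by
  classical
  by_cases hv : h <+: v
  · have hchild : #{c | h ++ [c] <+: v} ≤ 1 :=
      card_le_one.2 fun c hc c' hc' ↦
        eq_of_append_singleton_prefix (mem_filter.1 hc).2 (mem_filter.1 hc').2
    simp only [subtreeWeight, weight_append_singleton hβ.ne', if_pos hv]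
    rw [← sum_filter, sum_const, nsmul_eq_mul]
    exact mul_le_of_le_one_left (mul_pos hβ (weight_pos hβ h v)).le (by exact_mod_cast hchild)
  · have hzero (c : α) : subtreeWeight β (h ++ [c]) v = 0 :=
      if_neg fun hc ↦ hv ((List.prefix_append h [c]).trans hc)
    rw [sum_eq_zero fun c _ ↦ hzero c]
    exact mul_nonneg hβ.le (subtreeWeight_nonneg hβ h v)

variable {β : ℝ} {A : List α → Set (List α)}

lemma summable_subtreeWeight (hβ : 0 < β) (hsumm : ∀ h, Summable fun v : A h ↦ weight β h v)
    (g h : List α) : Summable fun v : A g ↦ subtreeWeight β h v :=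
  ((hsumm g).mul_left (β ^ ((h.length : ℤ) - g.length))).of_nonneg_of_le
    (fun v ↦ subtreeWeight_nonneg hβ h v)
    (fun v ↦ (subtreeWeight_le_weight hβ h v).trans_eq (weight_eq_zpow_mul hβ.ne' g h v))

variable (β A) in
noncomputable def moveThreat (g h : List α) : ℝ :=
  ∑' v : A g, subtreeWeight β h v

variable (β A) in
/-- Alice's move in round `m` of a play through `h` was `A (h.take m)`. -/
noncomputable def threat (h : List α) : ℝ :=
  ∑ m ∈ range h.length, moveThreat β A (h.take m) h

lemma moveThreat_nonneg (hβ : 0 < β) (g h : List α) : 0 ≤ moveThreat β A g h :=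
  tsum_nonneg fun v ↦ subtreeWeight_nonneg hβ h v

lemma one_le_moveThreat (hβ : 0 < β) (hsumm : ∀ h, Summable fun v : A h ↦ weight β h v)
    {g h : List α} (hh : h ∈ A g) : 1 ≤ moveThreat β A g h := by
  have hself : subtreeWeight β h h = 1 := by simp [subtreeWeight, weight_self]
  exact hself.symm.trans_le <| (summable_subtreeWeight hβ hsumm g h).le_tsum ⟨h, hh⟩
    fun v _ ↦ subtreeWeight_nonneg hβ h v

lemma moveThreat_self_le {ω : ℝ} (hβ : 0 < β)
    (hsumm : ∀ h, Summable fun v : A h ↦ weight β h v)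
    (hweight : ∀ h, ∑' v : A h, weight β h v ≤ ω) (h : List α) :
    moveThreat β A h h ≤ ω :=
  (Summable.tsum_le_tsum (fun v : A h ↦ subtreeWeight_le_weight hβ h v)
    (summable_subtreeWeight hβ hsumm h h) (hsumm h)).trans (hweight h)

lemma sum_moveThreat_append_singleton_le [Fintype α] (hβ : 0 < β)
    (hsumm : ∀ h, Summable fun v : A h ↦ weight β h v) (g h : List α) :
    ∑ c, moveThreat β A g (h ++ [c]) ≤ β * moveThreat β A g h := by
  simp only [moveThreat]
  rw [← Summable.tsum_finsetSum fun c _ ↦ summable_subtreeWeight hβ hsumm _ _, ← tsum_mul_left]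
  exact Summable.tsum_le_tsum (fun v ↦ sum_subtreeWeight_append_singleton_le hβ h v)
    (summable_sum fun c _ ↦ summable_subtreeWeight hβ hsumm _ _)
    ((summable_subtreeWeight hβ hsumm g h).mul_left β)

lemma threat_nil : threat β A ([] : List α) = 0 := by
  simp [threat]

lemma notMem_of_threat_lt_one (hβ : 0 < β) (hsumm : ∀ h, Summable fun v : A h ↦ weight β h v)
    {m : ℕ} {h : List α} (hh : threat β A h < 1) (hm : m < h.length) : h ∉ A (h.take m) := by
  intro hmem
  have hle : moveThreat β A (h.take m) h ≤ threat β A h :=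
    single_le_sum (f := fun i ↦ moveThreat β A (h.take i) h)
      (fun i _ ↦ moveThreat_nonneg hβ _ h) (mem_range.2 hm)
  exact (one_le_moveThreat hβ hsumm hmem).not_gt (hle.trans_lt hh)

lemma sum_threat_append_singleton_le [Fintype α] {ω : ℝ} (hβ : 0 < β)
    (hsumm : ∀ h, Summable fun v : A h ↦ weight β h v)
    (hweight : ∀ h, ∑' v : A h, weight β h v ≤ ω) (h : List α) :
    ∑ c, threat β A (h ++ [c]) ≤ β * (threat β A h + ω) := by
  have htake (c : α) : ∀ m ∈ range (h.length + 1), (h ++ [c]).take m = h.take m :=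
    fun m hm ↦ List.take_append_of_le_length (Nat.lt_succ_iff.1 (mem_range.1 hm))
  calc ∑ c, threat β A (h ++ [c])
      = ∑ m ∈ range (h.length + 1), ∑ c, moveThreat β A (h.take m) (h ++ [c]) := by
        simp only [threat, List.length_append, List.length_singleton]
        rw [sum_comm]
        exact sum_congr rfl fun m hm ↦ sum_congr rfl fun c _ ↦ by rw [htake c m hm]
    _ ≤ ∑ m ∈ range (h.length + 1), β * moveThreat β A (h.take m) h :=
        sum_le_sum fun m _ ↦ sum_moveThreat_append_singleton_le hβ hsumm _ h
    _ = β * (threat β A h + moveThreat β A h h) := by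
        rw [← mul_sum, sum_range_succ, threat, List.take_length]
    _ ≤ β * (threat β A h + ω) := by
        gcongr
        exact moveThreat_self_le hβ hsumm hweight h

lemma exists_threat_append_singleton_lt [Fintype α] {ω C : ℝ} (hβ : 0 < β)
    (hsumm : ∀ h, Summable fun v : A h ↦ weight β h v)
    (hweight : ∀ h, ∑' v : A h, weight β h v ≤ ω) (hC : β * (C + ω) ≤ Fintype.card α * C)
    {h : List α} (hh : threat β A h < C) : ∃ c, threat β A (h ++ [c]) < C := by
  have hsum : ∑ c, threat β A (h ++ [c]) < ∑ _c : α, C := calc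
    _ ≤ β * (threat β A h + ω) := sum_threat_append_singleton_le hβ hsumm hweight h
    _ < β * (C + ω) := by gcongr
    _ ≤ ∑ _c : α, C := by simpa using hC
  obtain ⟨c, -, hc⟩ := exists_lt_of_sum_lt hsum
  exact ⟨c, hc⟩

end BlockingGame

section BobPos

variable {k : ℕ}

lemma length_bobPos (pos : ℕ → Fin k) (n : ℕ) : (BobPos pos n).length = n := by
  simp [BobPos]

lemma bobPos_succ (pos : ℕ → Fin k) (n : ℕ) : BobPos pos (n + 1) = BobPos pos n ++ [pos n] := by
  rw [BobPos, List.ofFn_succ_last]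
  rfl

lemma bobPos_take (pos : ℕ → Fin k) {m n : ℕ} (hmn : m ≤ n) :
    (BobPos pos n).take m = BobPos pos m :=
  (Fin.ofFn_take_eq_take_ofFn hmn _).symm

lemma exists_forall_bobPos (P : List (Fin k) → Prop) (hnil : P [])
    (hstep : ∀ h, P h → ∃ c, P (h ++ [c])) : ∃ pos : ℕ → Fin k, ∀ n, P (BobPos pos n) := by
  choose next hnext using hstep
  let path : ℕ → {h // P h} :=
    fun n ↦ Nat.rec ⟨[], hnil⟩ (fun _ h ↦ ⟨h.1 ++ [next h.1 h.2], hnext h.1 h.2⟩) n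
  have hpath (n : ℕ) : BobPos (fun i ↦ next (path i).1 (path i).2) n = (path n).1 := by
    induction n with
    | zero => rfl
    | succ n ih => rw [bobPos_succ, ih]
  exact ⟨_, fun n ↦ hpath n ▸ (path n).2⟩

end BobPos

open BlockingGame in
theorem bob_wins_game_general (k : ℕ) (β ω : ℝ)
    (hβ1 : 1 < β) (hω : 0 < ω) (hcond : β * (1 + ω) ≤ k)
    (A : List (Fin k) → Set (List (Fin k)))
    (hlegal : ∀ h v, v ∈ A h → h <+: v ∧ v ≠ h)
    (hsumm : ∀ h, Summable (fun v : A h =>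
      β ^ (-(((v : List (Fin k)).length : ℤ) - (h.length : ℤ)))))
    (hweight : ∀ h, (∑' v : A h,
      β ^ (-(((v : List (Fin k)).length : ℤ) - (h.length : ℤ)))) ≤ ω) :
    ∃ pos : ℕ → Fin k, ∀ m n : ℕ, m ≤ n → BobPos pos n ∉ A (BobPos pos m) := by
  have hβ : 0 < β := one_pos.trans hβ1
  have hkβ : 0 < (k : ℝ) - β := by nlinarith
  set C := β * ω / (k - β)
  have hC1 : C ≤ 1 := by
    rw [div_le_one hkβ]
    nlinarith
  have hCfix : β * (C + ω) = k * C := by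
    simp only [C]
    field_simp
    ring
  obtain ⟨pos, hpos⟩ := exists_forall_bobPos (fun h ↦ threat β A h < C)
    (by rw [threat_nil]; positivity)
    fun h ↦ exists_threat_append_singleton_lt hβ hsumm hweight (by simp [hCfix])
  refine ⟨pos, fun m n hmn hmem ↦ ?_⟩
  rcases hmn.eq_or_lt with rfl | hlt
  · exact (hlegal _ _ hmem).2 rfl
  · rw [← bobPos_take pos hlt.le] at hmem
    exact notMem_of_threat_lt_one hβ hsumm ((hpos n).trans_le hC1)
      (by rwa [length_bobPos]) hmem

/-- **Theorem (winning strategy in the (β,ω,k)-game).**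
If `k > 1`, `β ∈ (1,k)`, `ω > 0` and `β(1+ω) ≤ k`, then against any strategy of
Alice (given by the set `A h` of vertices she newly forbids when Bob's history is `h`,
consisting of proper extensions of `h` of relative weight at most `ω`), Bob has a path
that never enters a forbidden vertex. -/
theorem bob_wins_game (k : ℕ) (hk : 1 < k) (β ω : ℝ)
    (hβ1 : 1 < β) (hβk : β < k) (hω : 0 < ω) (hcond : β * (1 + ω) ≤ k)
    (A : List (Fin k) → Set (List (Fin k)))
    (hlegal : ∀ h v, v ∈ A h → h <+: v ∧ v ≠ h)
    (hsumm : ∀ h, Summable (fun v : A h =>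
      β ^ (-(((v : List (Fin k)).length : ℤ) - (h.length : ℤ)))))
    (hweight : ∀ h, (∑' v : A h,
      β ^ (-(((v : List (Fin k)).length : ℤ) - (h.length : ℤ)))) ≤ ω) :
    ∃ pos : ℕ → Fin k, ∀ m n : ℕ, m ≤ n → BobPos pos n ∉ A (BobPos pos m) :=
  bob_wins_game_general k β ω hβ1 hω hcond A hlegal hsumm hweight
end

section
/- In the (β, ω, k)-game with β(1+ω) ≤ k, Bob can maintain the following invariant: after each of his moves, the total weight of forbidden vertices in the subtree rooted at his current position is strictly less than 1. Concretely: if S is a set of vertices in the k-ary tree of total weight less than 1 + ω (with weight β^{-l} at depth l) not containing the root, then there exists a child c of the root such that the total weight, measured from c (i.e., multiplied by β), of the vertices of S lying in the subtree of c is less than 1, provided β(1+ω) ≤ k. -/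
/-
Every vertex of `S` other than the root lies in the subtree of exactly one child `c` of the
root, so the weights of `S ∩ subtree c`, measured from `c`, add up over the `k` children to
`β` times the weight of `S`, which is less than `β (1 + ω) ≤ k`. Hence one of these `k`
numbers is less than `1`.
-/

theorem List.singleton_prefix_iff_head {α : Type*} {v : List α} (hv : v ≠ []) {c : α} :
    [c] <+: v ↔ v.head hv = c := by
  cases v with
  | nil => exact absurd rfl hv
  | cons a t => simp [eq_comm]

theorem HasSum.tsum_subtree {α M : Type*} [AddCommGroup M] [UniformSpace M]
    [IsUniformAddGroup M] [CompleteSpace M] [T2Space M] {S : Set (List α)}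
    {f : List α → M} {a : M} (hf : HasSum (fun v : S => f v) a) (hS : [] ∉ S) :
    HasSum (fun c : α => ∑' v : {v : List α // v ∈ S ∧ [c] <+: v}, f v) a := by
  have hne : ∀ v : S, (v : List α) ≠ [] := fun v h => hS (h ▸ v.2)
  convert hf.tsum_fiberwise (fun v : S => (v : List α).head (hne v)) using 2 with c
  let e : (fun v : S => (v : List α).head (hne v)) ⁻¹' {c} ≃
      {v : List α // v ∈ S ∧ [c] <+: v} :=
    (Equiv.subtypeEquivRight fun v => (List.singleton_prefix_iff_head (hne v)).symm).trans
      (Equiv.subtypeSubtypeEquivSubtypeInter (· ∈ S) ([c] <+: ·))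
  exact (e.tsum_eq fun v => f v).symm

theorem exists_good_child_general (k : ℕ) (β ω : ℝ)
    (hβ1 : 1 < β) (hcond : β * (1 + ω) ≤ k)
    (S : Set (List (Fin k))) (hroot : [] ∉ S)
    (hsumm : Summable (fun v : S => β ^ (-((v : List (Fin k)).length : ℤ))))
    (hweight : (∑' v : S, β ^ (-((v : List (Fin k)).length : ℤ))) < 1 + ω) :
    ∃ c : Fin k,
      (∑' v : {v : List (Fin k) // v ∈ S ∧ [c] <+: v},
        β ^ (-(((v : List (Fin k)).length : ℤ) - 1))) < 1 := by
  have hβ0 : 0 < β := one_pos.trans hβ1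
  set w : Fin k → ℝ := fun c =>
    ∑' v : {v : List (Fin k) // v ∈ S ∧ [c] <+: v}, β ^ (-((v : List (Fin k)).length : ℤ))
  have hshift : ∀ c, (∑' v : {v : List (Fin k) // v ∈ S ∧ [c] <+: v},
      β ^ (-(((v : List (Fin k)).length : ℤ) - 1))) = β * w c := fun c => by
    rw [← tsum_mul_left]
    refine tsum_congr fun v => ?_
    rw [neg_sub, zpow_sub₀ hβ0.ne', zpow_one, div_eq_mul_inv, zpow_neg]
  have hsum : ∑ c, β * w c < ∑ _c : Fin k, (1 : ℝ) := calc
    ∑ c, β * w c = β * ∑' v : S, β ^ (-((v : List (Fin k)).length : ℤ)) := by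
      rw [← Finset.mul_sum, (hasSum_fintype w).unique
        (HasSum.tsum_subtree (f := fun v => β ^ (-(v.length : ℤ))) hsumm.hasSum hroot)]
    _ < β * (1 + ω) := mul_lt_mul_of_pos_left hweight hβ0
    _ ≤ ∑ _c : Fin k, (1 : ℝ) := by simpa using hcond
  obtain ⟨c, -, hc⟩ := Finset.exists_lt_of_sum_lt hsum
  exact ⟨c, (hshift c).trans_lt hc⟩

/-- **Invariant step of Bob's strategy.**
If `S` is a set of vertices of the `k`-ary tree (vertices are words over `Fin k`,
the root is `[]`, a vertex at depth `l` has weight `β^{-l}`), `[] ∉ S`, and the total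
weight of `S` is less than `1 + ω`, where `β(1+ω) ≤ k`, then some child `c` of the root
is such that the total weight of the part of `S` lying in the subtree of `c`, measured
from `c` (i.e. multiplied by `β`), is less than `1`. -/
theorem exists_good_child (k : ℕ) (hk : 1 < k) (β ω : ℝ)
    (hβ1 : 1 < β) (hβk : β < k) (hω : 0 < ω) (hcond : β * (1 + ω) ≤ k)
    (S : Set (List (Fin k))) (hroot : [] ∉ S)
    (hsumm : Summable (fun v : S => β ^ (-((v : List (Fin k)).length : ℤ))))
    (hweight : (∑' v : S, β ^ (-((v : List (Fin k)).length : ℤ))) < 1 + ω) :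
    ∃ c : Fin k,
      (∑' v : {v : List (Fin k) // v ∈ S ∧ [c] <+: v},
        β ^ (-(((v : List (Fin k)).length : ℤ) - 1))) < 1 :=
  exists_good_child_general k β ω hβ1 hcond S hroot hsumm hweight
end

section
/- Let A be a finite alphabet of size k and F a set of nonempty words over A. If there exists β ∈ (1, k) with β(1 + Σ_{f ∈ F} β^{-|f|}) ≤ k, then there exists an infinite sequence over A that contains no word of F as a factor (contiguous substring). -/
/-! Let `g n` be the number of words of length `n` avoiding `F` and `T = Σ_{f ∈ F} β^{-|f|}`.
Appending a letter to an avoiding word of length `n` gives either an avoiding word or a word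
`u ++ f` with `f ∈ F` and `u` avoiding of length `n + 1 - |f|`, so
`k g n ≤ g (n + 1) + Σ_{|f| ≤ n + 1} g (n + 1 - |f|)`. By strong induction `β g m ≤ g (m + 1)`
for all `m`: the induction hypothesis gives `g (n + 1 - |f|) ≤ β^{1 - |f|} g n`, hence
`g (n + 1) ≥ (k - β T) g n ≥ β g n`. So avoiding words exist in every length, and König's lemma,
here compactness of `A^ℕ`, turns them into an infinite avoiding sequence. -/

open Finset

theorem pow_mul_le_of_forall_mul_le_succ {R : Type*} [Semiring R] [PartialOrder R]
    [IsOrderedRing R] {a : ℕ → R} {β : R} (hβ : 0 ≤ β) {n : ℕ}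
    (h : ∀ m < n, β * a m ≤ a (m + 1)) {m d : ℕ} (hmd : m + d ≤ n) :
    β ^ d * a m ≤ a (m + d) := by
  induction d with
  | zero => simp
  | succ d ih =>
    calc β ^ (d + 1) * a m = β * (β ^ d * a m) := by rw [pow_succ', mul_assoc]
      _ ≤ β * a (m + d) := mul_le_mul_of_nonneg_left (ih (by omega)) hβ
      _ ≤ a (m + (d + 1)) := h _ (by omega)

theorem le_mul_zpow_neg_of_forall_mul_le_succ {R : Type*} [Field R] [LinearOrder R]
    [IsStrictOrderedRing R] {a : ℕ → R} {β : R} (hβ : 0 < β) {n l : ℕ}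
    (h : ∀ m < n, β * a m ≤ a (m + 1)) (hl1 : 1 ≤ l) (hln : l ≤ n + 1) :
    a (n + 1 - l) ≤ β * β ^ (-(l : ℤ)) * a n := by
  have hpow : β ^ (l - 1) * (β * β ^ (-(l : ℤ))) = 1 := by
    rw [← mul_assoc, ← pow_succ, Nat.sub_add_cancel hl1, zpow_neg, zpow_natCast,
      mul_inv_cancel₀ (pow_ne_zero _ hβ.ne')]
  have hchain := pow_mul_le_of_forall_mul_le_succ hβ.le h (m := n + 1 - l) (d := l - 1) (by omega)
  rw [show n + 1 - l + (l - 1) = n by omega] at hchain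
  calc a (n + 1 - l) = β ^ (l - 1) * (β * β ^ (-(l : ℤ))) * a (n + 1 - l) := by
        rw [hpow, one_mul]
    _ = β * β ^ (-(l : ℤ)) * (β ^ (l - 1) * a (n + 1 - l)) := by ring
    _ ≤ β * β ^ (-(l : ℤ)) * a n := mul_le_mul_of_nonneg_left hchain (by positivity)

theorem List.ofFn_add_suffix {α : Type*} (s : ℕ → α) (i n : ℕ) :
    (List.ofFn fun j : Fin n => s (i + j)) <:+ List.ofFn fun j : Fin (i + n) => s j := by
  rw [List.ofFn_add]
  exact List.suffix_append _ _

theorem List.exists_seq_forall_ofFn_of_forall_exists {A : Type*} [Finite A] {P : List A → Prop}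
    (hP : ∀ ⦃u v⦄, u <+: v → P v → P u) (h : ∀ n, ∃ w : List A, w.length = n ∧ P w) :
    ∃ s : ℕ → A, ∀ n, P (List.ofFn fun j : Fin n => s j) := by
  let : TopologicalSpace A := ⊥
  have : DiscreteTopology A := ⟨rfl⟩
  have hA : Nonempty A := by
    obtain ⟨w, hw, -⟩ := h 1
    exact ⟨w.head (List.ne_nil_of_length_eq_add_one hw)⟩
  let t : ℕ → Set (ℕ → A) := fun n => {s | P (List.ofFn fun j : Fin n => s j)}
  have htcl (n : ℕ) : IsClosed (t n) :=
    (isClosed_discrete {v : Fin n → A | P (List.ofFn v)}).preimage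
      (f := fun (s : ℕ → A) (j : Fin n) => s j) (by fun_prop)
  have htd (n : ℕ) : t (n + 1) ⊆ t n := fun s hs =>
    hP (by rw [List.ofFn_succ', List.concat_eq_append]; exact List.prefix_append _ _) hs
  have htn (n : ℕ) : (t n).Nonempty := by
    obtain ⟨w, rfl, hw⟩ := h n
    refine ⟨fun j => w.getD j (Classical.arbitrary A), ?_⟩
    simpa [t, List.getD_eq_getElem] using hw
  obtain ⟨s, hs⟩ := IsCompact.nonempty_iInter_of_sequence_nonempty_isCompact_isClosed t htd htn
    (htcl 0).isCompact htcl
  exact ⟨s, Set.mem_iInter.1 hs⟩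

section Words

variable {A : Type*}

def Avoids (F : Set (List A)) (w : List A) : Prop := ∀ f ∈ F, ¬ f <:+: w

namespace Avoids

variable {F : Set (List A)} {u w : List A}

theorem of_isInfix (h : Avoids F w) (hu : u <:+: w) : Avoids F u :=
  fun f hf hfu => h f hf (hfu.trans hu)

theorem nil (hF : ∀ f ∈ F, f ≠ []) : Avoids F [] :=
  fun f hf hfu => hF f hf (List.sublist_nil.1 hfu.sublist)

theorem exists_suffix_of_dropLast (hd : Avoids F w.dropLast) (hw : ¬ Avoids F w) :
    ∃ f ∈ F, f <:+ w := by
  simp only [Avoids, not_forall, not_not] at hw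
  obtain ⟨f, hf, s, t, rfl⟩ := hw
  rcases List.eq_nil_or_concat t with rfl | ⟨t', b, rfl⟩
  · exact ⟨f, hf, s, (List.append_nil _).symm⟩
  · refine absurd ?_ (hd f hf)
    rw [List.concat_eq_append, ← List.append_assoc, List.dropLast_concat]
    exact List.infix_append _ _ _

end Avoids

section Counting

variable [Fintype A] (F : Set (List A))

variable (A) in
noncomputable def wordsOfLength (n : ℕ) : Finset (List A) :=
  (univ : Finset (Fin n → A)).map ⟨List.ofFn, List.ofFn_injective⟩

theorem mem_wordsOfLength {n : ℕ} {w : List A} : w ∈ wordsOfLength A n ↔ w.length = n := by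
  simp only [wordsOfLength, mem_map, mem_univ, true_and, Function.Embedding.coeFn_mk]
  refine ⟨fun ⟨v, hv⟩ => hv ▸ List.length_ofFn, ?_⟩
  rintro rfl
  exact ⟨w.get, List.ofFn_get w⟩

open Classical in
noncomputable def avoiding (n : ℕ) : Finset (List A) :=
  (wordsOfLength A n).filter (Avoids F)

open Classical in
noncomputable def minimalNonAvoiding (n : ℕ) : Finset (List A) :=
  (wordsOfLength A n).filter fun w => Avoids F w.dropLast ∧ ¬ Avoids F w

open Classical in
noncomputable def forbiddenUpTo (n : ℕ) : Finset F :=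
  ((range (n + 1)).biUnion (wordsOfLength A)).subtype (· ∈ F)

variable {F}

theorem mem_avoiding {n : ℕ} {w : List A} : w ∈ avoiding F n ↔ w.length = n ∧ Avoids F w := by
  simp [avoiding, mem_wordsOfLength]

theorem mem_minimalNonAvoiding {n : ℕ} {w : List A} :
    w ∈ minimalNonAvoiding F n ↔ w.length = n ∧ Avoids F w.dropLast ∧ ¬ Avoids F w := by
  simp [minimalNonAvoiding, mem_wordsOfLength]

theorem mem_forbiddenUpTo {n : ℕ} {f : F} : f ∈ forbiddenUpTo F n ↔ (f : List A).length ≤ n := by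
  simp [forbiddenUpTo, mem_wordsOfLength]

theorem card_mul_card_avoiding_le (n : ℕ) :
    Fintype.card A * #(avoiding F n) ≤
      #(avoiding F (n + 1)) + #(minimalNonAvoiding F (n + 1)) := by
  classical
  have hinj : Function.Injective fun p : List A × A => p.1 ++ [p.2] := fun p q h => by
    obtain ⟨h1, h2⟩ := List.append_inj' h rfl
    exact Prod.ext h1 (List.singleton_inj.1 h2)
  have hsub : ((avoiding F n) ×ˢ univ).image (fun p : List A × A => p.1 ++ [p.2]) ⊆
      avoiding F (n + 1) ∪ minimalNonAvoiding F (n + 1) := by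
    simp only [subset_iff, mem_image, mem_product, mem_univ, and_true, mem_union, mem_avoiding,
      mem_minimalNonAvoiding]
    rintro _ ⟨⟨u, a⟩, ⟨rfl, hu⟩, rfl⟩
    simp only [List.length_append, List.length_singleton, List.dropLast_concat, true_and]
    tauto
  calc Fintype.card A * #(avoiding F n)
      = #(((avoiding F n) ×ˢ univ).image fun p : List A × A => p.1 ++ [p.2]) := by
        rw [card_image_of_injective _ hinj, card_product, card_univ, mul_comm]
    _ ≤ _ := card_le_card hsub
    _ ≤ _ := card_union_le _ _

theorem card_minimalNonAvoiding_le (hF : ∀ f ∈ F, f ≠ []) (n : ℕ) :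
    #(minimalNonAvoiding F n) ≤
      ∑ f ∈ forbiddenUpTo F n, #(avoiding F (n - (f : List A).length)) := by
  classical
  have hsub : minimalNonAvoiding F n ⊆ (forbiddenUpTo F n).biUnion fun f =>
      (avoiding F (n - (f : List A).length)).image (· ++ (f : List A)) := by
    intro w hw
    obtain ⟨hlen, hd, hw⟩ := mem_minimalNonAvoiding.1 hw
    obtain ⟨f, hf, v, rfl⟩ := hd.exists_suffix_of_dropLast hw
    simp only [mem_biUnion, mem_image, mem_avoiding, mem_forbiddenUpTo]
    refine ⟨⟨f, hf⟩, by simp [← hlen], v, ⟨by simp [← hlen], hd.of_isInfix ?_⟩, rfl⟩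
    rw [List.dropLast_append_of_ne_nil (hF f hf)]
    exact (List.prefix_append _ _).isInfix
  calc #(minimalNonAvoiding F n) ≤ _ := card_le_card hsub
    _ ≤ _ := card_biUnion_le
    _ ≤ _ := sum_le_sum fun _ _ => card_image_le

end Counting

section Growth

variable [Fintype A] {F : Set (List A)} {β : ℝ}

theorem mul_card_avoiding_le_card_avoiding_succ (hF : ∀ f ∈ F, f ≠ []) (hβ : 0 < β)
    (hsumm : Summable fun f : F => β ^ (-((f : List A).length : ℤ)))
    (hcond : β * (1 + ∑' f : F, β ^ (-((f : List A).length : ℤ))) ≤ Fintype.card A) (n : ℕ) :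
    β * #(avoiding F n) ≤ #(avoiding F (n + 1)) := by
  induction n using Nat.strong_induction_on with
  | _ n ih =>
  set g : ℕ → ℝ := fun m => #(avoiding F m) with hg
  set T := ∑' f : F, β ^ (-((f : List A).length : ℤ))
  have hshort : ∀ f ∈ forbiddenUpTo F (n + 1),
      g (n + 1 - (f : List A).length) ≤ β * β ^ (-((f : List A).length : ℤ)) * g n :=
    fun f hf => le_mul_zpow_neg_of_forall_mul_le_succ (a := g) hβ ih
      (List.length_pos_iff.2 (hF f f.2)) (mem_forbiddenUpTo.1 hf)
  have hsum : ∑ f ∈ forbiddenUpTo F (n + 1), β ^ (-((f : List A).length : ℤ)) ≤ T :=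
    hsumm.sum_le_tsum _ fun _ _ => by positivity
  have hcount : (Fintype.card A : ℝ) * g n ≤
      g (n + 1) + ∑ f ∈ forbiddenUpTo F (n + 1), g (n + 1 - (f : List A).length) := by
    simp only [hg]
    exact_mod_cast (card_mul_card_avoiding_le n).trans
      (Nat.add_le_add_left (card_minimalNonAvoiding_le hF (n + 1)) _)
  have hgn : 0 ≤ g n := Nat.cast_nonneg _
  have hkey : (Fintype.card A : ℝ) * g n ≤ g (n + 1) + β * T * g n := calc
    _ ≤ g (n + 1) + ∑ f ∈ forbiddenUpTo F (n + 1), g (n + 1 - (f : List A).length) := hcount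
    _ ≤ g (n + 1) + ∑ f ∈ forbiddenUpTo F (n + 1), β * β ^ (-((f : List A).length : ℤ)) * g n :=
        by gcongr with f hf; exact hshort f hf
    _ = g (n + 1) +
          β * (∑ f ∈ forbiddenUpTo F (n + 1), β ^ (-((f : List A).length : ℤ))) * g n := by
        rw [mul_sum, sum_mul]
    _ ≤ g (n + 1) + β * T * g n := by gcongr
  linarith [mul_le_mul_of_nonneg_right hcond hgn]

theorem avoiding_nonempty (hF : ∀ f ∈ F, f ≠ []) (hβ : 0 < β)
    (hsumm : Summable fun f : F => β ^ (-((f : List A).length : ℤ)))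
    (hcond : β * (1 + ∑' f : F, β ^ (-((f : List A).length : ℤ))) ≤ Fintype.card A) (n : ℕ) :
    (avoiding F n).Nonempty := by
  induction n with
  | zero => exact ⟨[], mem_avoiding.2 ⟨rfl, Avoids.nil hF⟩⟩
  | succ n ih =>
    have hpos : (0 : ℝ) < #(avoiding F (n + 1)) :=
      (mul_pos hβ (by exact_mod_cast ih.card_pos)).trans_le
        (mul_card_avoiding_le_card_avoiding_succ hF hβ hsumm hcond n)
    exact card_pos.1 (by exact_mod_cast hpos)

end Growth

end Words

theorem miller_general {A : Type*} [Fintype A] (F : Set (List A))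
    (hF : ∀ f ∈ F, f ≠ []) (β : ℝ)
    (hβ1 : 1 < β)
    (hsumm : Summable (fun f : F => β ^ (-((f : List A).length : ℤ))))
    (hcond : β * (1 + ∑' f : F, β ^ (-((f : List A).length : ℤ)))
      ≤ Fintype.card A) :
    ∃ w : ℕ → A, ∀ i n : ℕ, (List.ofFn fun j : Fin n => w (i + j)) ∉ F := by
  have hwords (n : ℕ) : ∃ w : List A, w.length = n ∧ Avoids F w :=
    let ⟨w, hw⟩ := avoiding_nonempty hF (zero_lt_one.trans hβ1) hsumm hcond n
    ⟨w, mem_avoiding.1 hw⟩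
  obtain ⟨s, hs⟩ := List.exists_seq_forall_ofFn_of_forall_exists
    (fun _ _ hprefix hv => hv.of_isInfix hprefix.isInfix) hwords
  exact ⟨s, fun i n hmem => hs (i + n) _ hmem (List.ofFn_add_suffix s i n).isInfix⟩

/-- **Miller's theorem.** Let `A` be a finite alphabet with `k ≥ 2` letters and `F` a set
of nonempty words over `A`. If there is `β ∈ (1,k)` with
`β (1 + Σ_{f ∈ F} β^{-|f|}) ≤ k`, then there is an infinite sequence over `A`
avoiding all words of `F` as factors. -/
theorem miller {A : Type*} [Fintype A] (F : Set (List A))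
    (hF : ∀ f ∈ F, f ≠ []) (β : ℝ)
    (hβ1 : 1 < β) (hβk : β < Fintype.card A)
    (hsumm : Summable (fun f : F => β ^ (-((f : List A).length : ℤ))))
    (hcond : β * (1 + ∑' f : F, β ^ (-((f : List A).length : ℤ)))
      ≤ Fintype.card A) :
    ∃ w : ℕ → A, ∀ i n : ℕ, (List.ofFn fun j : Fin n => w (i + j)) ∉ F :=
  miller_general F hF β hβ1 hsumm hcond
end

section
/- For every function α : ℕ → Finset S assigning to each position a set of exactly 4 letters from a (possibly infinite) alphabet S, there exists an infinite sequence w : ℕ → S with w(i) ∈ α(i) for all i, such that w is square-free: w contains no factor of the form uu for a nonempty word u. -/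
/-!
Let `C n` be the number of square-free words `w` of length `n` with `w[i] ∈ α i`. Appending a
letter of `α n` to such a word gives `4 * C n` words; one that is not square-free ends in a square
`y ++ y` and is determined by its square-free prefix of length `n + 1 - |y|`. Hence `4 * C n ≤ C (n + 1) + ∑ k ≤ n, C k`. Inductively `C` at least
doubles at each step, so the sum is at most `2 * C n` and `C (n + 1) ≥ 2 * C n ≥ 2 ^ (n + 1)`.
Kőnig's lemma on the finitely branching tree of these words then yields the infinite sequence.
-/

open Finset

namespace List

variable {S : Type*}

def IsSquareFree (w : List S) : Prop := ∀ u : List S, u ++ u <:+: w → u = []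

theorem isSquareFree_nil : ([] : List S).IsSquareFree := fun u hu => by
  simpa using eq_nil_of_infix_nil hu

theorem IsSquareFree.of_infix {v w : List S} (hw : w.IsSquareFree) (hvw : v <:+: w) :
    v.IsSquareFree :=
  fun u hu => hw u (hu.trans hvw)

theorem IsSquareFree.append_singleton_or_exists_square_suffix {u : List S} (hu : u.IsSquareFree)
    (a : S) : (u ++ [a]).IsSquareFree ∨ ∃ x y, y ≠ [] ∧ u ++ [a] = x ++ y ++ y := by
  refine or_iff_not_imp_left.mpr fun h => ?_
  simp only [IsSquareFree, not_forall] at h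
  obtain ⟨y, hy, hne⟩ := h
  rcases infix_concat_iff.mp hy with ⟨x, hx⟩ | hyu
  · exact ⟨x, y, hne, by simpa using hx.symm⟩
  · exact absurd (hu y hyu) hne

theorem ofFn_append_ofFn_infix (s : ℕ → S) (i n m : ℕ) :
    (ofFn fun j : Fin n => s (i + j)) ++ (ofFn fun j : Fin m => s (i + n + j)) <:+:
      ofFn fun j : Fin (i + n + m) => s j := by
  rw [ofFn_add, ofFn_add]
  exact ⟨ofFn fun j : Fin i => s j, [], by simp⟩

theorem exists_seq_forall_ofFn_mem {W : ℕ → Finset (List S)} (hne : ∀ n, (W n).Nonempty)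
    (hlen : ∀ n, ∀ w ∈ W n, w.length = n) (htake : ∀ n, ∀ w ∈ W n, ∀ k ≤ n, w.take k ∈ W k) :
    ∃ s : ℕ → S, ∀ n, ofFn (fun i : Fin n => s i) ∈ W n := by
  have hW n : Nonempty (W n) := (hne n).coe_sort
  obtain ⟨f, hf⟩ := exists_seq_forall_proj_of_forall_finite (α := fun n => W n)
    (fun {i j} hij w => ⟨w.1.take i, htake j w.1 w.2 i hij⟩)
    (fun i w => Subtype.ext (take_of_length_le (hlen i w.1 w.2).le))
    (fun _ _ _ hij _ _ => Subtype.ext (by simp [take_take, min_eq_left hij]))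
    (fun _ _ => Set.toFinite _)
  have hf' : ∀ i j, i ≤ j → (f j).1.take i = (f i).1 :=
    fun i j hij => congrArg Subtype.val (hf hij)
  refine ⟨fun i => (f (i + 1)).1[i]'(by rw [hlen _ _ (f (i + 1)).2]; omega), fun n => ?_⟩
  convert (f n).2 using 1
  apply ext_getElem (by simp [hlen _ _ (f n).2])
  intro i h1 h2
  simp [← hf' (i + 1) n (by rw [length_ofFn] at h1; omega)]

end List

theorem sum_range_le_of_two_mul_le {c : ℕ → ℕ} {N : ℕ} (h : ∀ k < N, 2 * c k ≤ c (k + 1)) :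
    ∑ k ∈ range N, c k ≤ c N := by
  induction N with
  | zero => simp
  | succ N ih =>
    rw [sum_range_succ]
    have := ih fun k hk => h k (by omega)
    have := h N (by omega)
    omega

theorem two_mul_le_succ_of_four_mul_le {c : ℕ → ℕ}
    (h : ∀ N, 4 * c N ≤ c (N + 1) + ∑ k ∈ range (N + 1), c k) (N : ℕ) :
    2 * c N ≤ c (N + 1) := by
  induction N using Nat.strong_induction_on with
  | _ N ih =>
    have hsum := sum_range_le_of_two_mul_le ih
    have hN := h N
    rw [sum_range_succ] at hN
    omega

section SquareFreeWords

variable {S : Type*} (α : ℕ → Finset S)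

open Classical in
noncomputable def squareFreeWords : ℕ → Finset (List S)
  | 0 => {[]}
  | n + 1 => ((squareFreeWords n ×ˢ α n).image fun p => p.1 ++ [p.2]).filter List.IsSquareFree

variable {α}

theorem mem_squareFreeWords {n : ℕ} {w : List S} :
    w ∈ squareFreeWords α n ↔
      w.length = n ∧ (∀ i (h : i < w.length), w[i] ∈ α i) ∧ w.IsSquareFree := by
  induction n generalizing w with
  | zero =>
    simp only [squareFreeWords, mem_singleton, List.length_eq_zero_iff, iff_self_and]
    rintro rfl
    exact ⟨nofun, List.isSquareFree_nil⟩
  | succ n ih =>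
    simp only [squareFreeWords, mem_filter, mem_image, mem_product, Prod.exists, ih]
    constructor
    · rintro ⟨⟨u, a, ⟨⟨rfl, hu, -⟩, ha⟩, rfl⟩, hw⟩
      refine ⟨by simp, fun i hi => ?_, hw⟩
      rw [List.getElem_append]
      split_ifs with h
      · exact hu i h
      · simp only [List.length_append, List.length_singleton] at hi
        simpa [show i = u.length by omega] using ha
    · rintro ⟨hlen, hw, hsf⟩
      have hne : w ≠ [] := List.ne_nil_of_length_pos (by omega)
      refine ⟨⟨w.dropLast, w.getLast hne, ⟨⟨by simp [hlen], fun i hi => ?_,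
        hsf.of_infix (List.dropLast_prefix w).isInfix⟩, ?_⟩, List.dropLast_append_getLast hne⟩, hsf⟩
      · rw [List.getElem_dropLast]; exact hw i _
      · rw [List.getLast_eq_getElem]; simpa [hlen] using hw (w.length - 1) (by omega)

theorem List.IsPrefix.mem_squareFreeWords {n : ℕ} {v w : List S} (hvw : v <+: w)
    (hw : w ∈ squareFreeWords α n) : v ∈ squareFreeWords α v.length := by
  rw [_root_.mem_squareFreeWords] at hw ⊢
  exact ⟨rfl, fun i hi => hvw.getElem hi ▸ hw.2.1 i _, hw.2.2.of_infix hvw.isInfix⟩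

theorem card_mul_card_squareFreeWords_le (N : ℕ) :
    #(α N) * #(squareFreeWords α N) ≤
      #(squareFreeWords α (N + 1)) + ∑ k ∈ range (N + 1), #(squareFreeWords α k) := by
  classical
  set E := (squareFreeWords α N ×ˢ α N).image fun p => p.1 ++ [p.2]
  have hE : #E = #(α N) * #(squareFreeWords α N) := by
    rw [card_image_of_injective _ fun p q h => Prod.ext_iff.mpr (List.append_singleton_inj.mp h),
      card_product, mul_comm]
  -- An extension ending in a square `y ++ y` is its square-free prefix `v` (which ends with `y`)
  -- followed by the last `N + 1 - |v|` letters of `v`.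
  have hsub : E.filter (¬ ·.IsSquareFree) ⊆ (range (N + 1)).biUnion fun k =>
      (squareFreeWords α k).image fun v => v ++ v.rtake (N + 1 - k) := by
    simp only [subset_iff, mem_filter, E, mem_image, mem_product, Prod.exists, mem_biUnion,
      mem_range]
    rintro _ ⟨⟨u, a, ⟨hu, ha⟩, rfl⟩, hw⟩
    obtain ⟨hulen, -, husf⟩ := mem_squareFreeWords.mp hu
    obtain ⟨x, y, hy, hxy⟩ := (husf.append_singleton_or_exists_square_suffix a).resolve_left hw
    have hlen := congrArg List.length hxy
    simp only [List.length_append, List.length_singleton, hulen] at hlen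
    have hy0 := List.length_pos_of_ne_nil hy
    refine ⟨(x ++ y).length, by rw [List.length_append]; omega, x ++ y, ?_, ?_⟩
    · have hprefix : x ++ y <+: u := by
        refine List.prefix_of_prefix_length_le (l₃ := u ++ [a]) ?_ (List.prefix_append _ _) ?_
        · rw [hxy]; exact List.prefix_append _ _
        · rw [List.length_append]; omega
      exact hprefix.mem_squareFreeWords hu
    · rw [hxy, List.rtake, List.length_append,
        show x.length + y.length - (N + 1 - (x.length + y.length)) = x.length by omega,
        List.drop_left]
  calc #(α N) * #(squareFreeWords α N)
      = #(E.filter (·.IsSquareFree)) + #(E.filter (¬ ·.IsSquareFree)) := by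
        rw [card_filter_add_card_filter_not, hE]
    _ ≤ #(squareFreeWords α (N + 1)) + ∑ k ∈ range (N + 1), #(squareFreeWords α k) := by
        gcongr
        · rfl
        · exact (card_le_card hsub).trans <|
            card_biUnion_le.trans (sum_le_sum fun _ _ => card_image_le)

theorem two_pow_le_card_squareFreeWords (hα : ∀ n, 4 ≤ #(α n)) (n : ℕ) :
    2 ^ n ≤ #(squareFreeWords α n) := by
  have hdouble := two_mul_le_succ_of_four_mul_le fun N =>
    (Nat.mul_le_mul_right _ (hα N)).trans (card_mul_card_squareFreeWords_le N)
  induction n with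
  | zero => simp [squareFreeWords]
  | succ n ih => rw [pow_succ]; linarith [hdouble n]

end SquareFreeWords

/-- **Square-free sequences for 4-list assignments.** For every assignment `α` of a
4-element set of letters to each position, there is a sequence respecting `α` that is
square-free: no factor has the form `uu` with `u` nonempty. -/
theorem squarefree_of_four_list_assignment {S : Type*} (α : ℕ → Finset S)
    (hα : ∀ n, (α n).card = 4) :
    ∃ w : ℕ → S, (∀ i, w i ∈ α i) ∧
      ∀ i n : ℕ, 0 < n →
        (List.ofFn fun j : Fin n => w (i + j)) ≠
          (List.ofFn fun j : Fin n => w (i + n + j)) := by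
  have hne n : (squareFreeWords α n).Nonempty := card_pos.mp <|
    Nat.one_le_two_pow.trans (two_pow_le_card_squareFreeWords (fun n => (hα n).ge) n)
  obtain ⟨w, hw⟩ := List.exists_seq_forall_ofFn_mem hne
    (fun _ _ hv => (mem_squareFreeWords.mp hv).1)
    (fun _ v hv k hk => by
      simpa [(mem_squareFreeWords.mp hv).1, hk] using (v.take_prefix k).mem_squareFreeWords hv)
  refine ⟨w, fun i => ?_, fun i n hn hsq => ?_⟩
  · have := (mem_squareFreeWords.mp (hw (i + 1))).2.1 i (by rw [List.length_ofFn]; omega)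
    rwa [List.getElem_ofFn] at this
  · have hinfix := List.ofFn_append_ofFn_infix w i n n
    rw [← hsq] at hinfix
    simpa [hn.ne'] using (mem_squareFreeWords.mp (hw (i + n + n))).2.2 _ hinfix
end

section
/- For every real c with 1 < c < 2 there exist a natural number N and an infinite binary sequence α such that for every binary string x of length n ≥ N, any two occurrences of x in α start at positions whose distance is at least c^n. -/
/-!
Let `q` be the size of the alphabet and call a word separated if no block of length `n ≥ N` in it
recurs at a distance `d < c ^ n`. Counting the `q` one-letter extensions of the separated words of
length `M` gives `q |S_M| ≤ |S_{M+1}| + ∑_{n ≥ N} c ^ n |S_{M+1-n}|`. For `c < θ < q` and `N` so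
large that `∑_{n ≥ N} c ^ n / θ ^ (n - 1) ≤ q - θ`, this recursion forces `|S_{M+1}| ≥ θ |S_M|`
by induction, so separated words of every length exist; compactness of `A^ℕ` then yields an
infinite separated sequence.
-/

open Finset

variable {A : Type*}

def RepeatsAt (s : ℕ → A) (n i d : ℕ) : Prop :=
  ∀ t < n, s (i + t) = s (i + d + t)

def SeparatedUpTo (c : ℝ) (N M : ℕ) (s : ℕ → A) : Prop :=
  ∀ n i d : ℕ, N ≤ n → 0 < d → (d : ℝ) < c ^ n → i + d + n ≤ M → ¬ RepeatsAt s n i d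

section Sequences

variable {s s' : ℕ → A} {c : ℝ} {N M n i d : ℕ}

theorem RepeatsAt.congr (h : ∀ p < i + d + n, s p = s' p) (hs : RepeatsAt s n i d) :
    RepeatsAt s' n i d := fun t ht => by
  rw [← h _ (by omega), ← h _ (by omega), hs t ht]

theorem RepeatsAt.eq_of_eq_of_lt (hd : 0 < d) (hs : RepeatsAt s n i d) (hs' : RepeatsAt s' n i d)
    (h : ∀ p < i + d, s p = s' p) : ∀ p < i + d + n, s p = s' p := by
  induction n with
  | zero => simpa using h
  | succ n ih =>
    intro p hp
    have ih := ih (fun t ht => hs t (by omega)) (fun t ht => hs' t (by omega))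
    by_cases hpn : p < i + d + n
    · exact ih p hpn
    · obtain rfl : p = i + d + n := by omega
      rw [← hs n n.lt_succ_self, ← hs' n n.lt_succ_self]
      exact ih _ (by omega)

theorem SeparatedUpTo.mono {M' : ℕ} (h : M ≤ M') (hs : SeparatedUpTo c N M' s) :
    SeparatedUpTo c N M s :=
  fun n i d hn hd hdc hM => hs n i d hn hd hdc (hM.trans h)

theorem SeparatedUpTo.congr (h : ∀ p < M, s p = s' p) (hs : SeparatedUpTo c N M s) :
    SeparatedUpTo c N M s' :=
  fun n i d hn hd hdc hM hrep => hs n i d hn hd hdc hM <|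
    hrep.congr fun p hp => (h p (by omega)).symm

theorem SeparatedUpTo.exists_repeatsAt_of_not_succ (hs : SeparatedUpTo c N M s)
    (hs' : ¬ SeparatedUpTo c N (M + 1) s) :
    ∃ n d : ℕ, N ≤ n ∧ 0 < n ∧ 0 < d ∧ (d : ℝ) < c ^ n ∧ n + d ≤ M + 1 ∧
      RepeatsAt s n (M + 1 - n - d) d := by
  simp only [SeparatedUpTo, not_forall, not_not] at hs'
  obtain ⟨n, i, d, hn, hd, hdc, hM, hrep⟩ := hs'
  have hend : i + d + n = M + 1 := by
    by_contra hne
    exact hs n i d hn hd hdc (by omega) hrep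
  have hn0 : 0 < n := Nat.pos_of_ne_zero <| by
    rintro rfl
    rw [pow_zero, ← Nat.cast_one, Nat.cast_lt] at hdc
    omega
  exact ⟨n, d, hn, hn0, hd, hdc, by omega, by rwa [show M + 1 - n - d = i by omega]⟩

theorem pow_le_sub_of_forall_separatedUpTo (hs : ∀ M, SeparatedUpTo c N M s) (hn : N ≤ n) {j : ℕ}
    (hij : i < j) (h : ∀ t < n, s (i + t) = s (j + t)) : c ^ n ≤ (j : ℝ) - i := by
  by_contra! hlt
  refine hs (j + n) n i (j - i) hn (by omega) ?_ (by omega) fun t ht => ?_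
  · rwa [Nat.cast_sub hij.le]
  · rw [h t ht]; congr 1; omega

variable [TopologicalSpace A] [DiscreteTopology A]

theorem isOpen_setOf_repeatsAt : IsOpen {s : ℕ → A | RepeatsAt s n i d} := by
  have : {s : ℕ → A | RepeatsAt s n i d} = ⋂ t ∈ Set.Iio n, {s | s (i + t) = s (i + d + t)} := by
    ext; simp [RepeatsAt]
  rw [this]
  exact (Set.finite_Iio n).isOpen_biInter fun t _ =>
    (isOpen_discrete {x : A × A | x.1 = x.2}).preimage
      (f := fun s : ℕ → A => (s (i + t), s (i + d + t))) (by fun_prop)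

theorem isClosed_setOf_separatedUpTo : IsClosed {s : ℕ → A | SeparatedUpTo c N M s} := by
  simp only [SeparatedUpTo, Set.ofPred_forall]
  exact isClosed_iInter fun n => isClosed_iInter fun i => isClosed_iInter fun d =>
    isClosed_iInter fun _ => isClosed_iInter fun _ => isClosed_iInter fun _ =>
      isClosed_iInter fun _ => isOpen_setOf_repeatsAt.isClosed_compl

theorem exists_forall_separatedUpTo [Finite A] (h : ∀ M, ∃ s : ℕ → A, SeparatedUpTo c N M s) :
    ∃ s : ℕ → A, ∀ M, SeparatedUpTo c N M s := by
  have := IsCompact.nonempty_iInter_of_sequence_nonempty_isCompact_isClosed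
    (fun M => {s : ℕ → A | SeparatedUpTo c N M s}) (fun M s hs => hs.mono M.le_succ) h
    isClosed_setOf_separatedUpTo.isCompact fun M => isClosed_setOf_separatedUpTo
  simpa using this

end Sequences

section Growth

variable {s : ℕ → ℝ} {θ : ℝ}

theorem pow_mul_le_of_forall_mul_le (hθ : 0 ≤ θ) {M : ℕ} (h : ∀ j < M, θ * s j ≤ s (j + 1)) :
    ∀ k ≤ M, θ ^ k * s (M - k) ≤ s M := by
  intro k
  induction k with
  | zero => simp
  | succ k ih =>
    intro hk
    calc θ ^ (k + 1) * s (M - (k + 1)) = θ ^ k * (θ * s (M - (k + 1))) := by ring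
      _ ≤ θ ^ k * s (M - k) := by
        gcongr
        simpa [show M - (k + 1) + 1 = M - k by omega] using h (M - (k + 1)) (by omega)
      _ ≤ s M := ih (by omega)

theorem mul_le_succ_of_le_add_sum {q c : ℝ} {N : ℕ} (hN : 0 < N) (hc : 0 ≤ c) (hθ : 0 < θ)
    (hs : ∀ M, 0 ≤ s M) (htail : ∀ K, ∑ n ∈ Icc N K, c ^ n / θ ^ (n - 1) ≤ q - θ)
    (hrec : ∀ M, q * s M ≤ s (M + 1) + ∑ n ∈ Icc N (M + 1), c ^ n * s (M + 1 - n)) (M : ℕ) :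
    θ * s M ≤ s (M + 1) := by
  induction M using Nat.strong_induction_on with
  | _ M ih =>
  have hterm : ∀ n ∈ Icc N (M + 1), c ^ n * s (M + 1 - n) ≤ c ^ n / θ ^ (n - 1) * s M := by
    intro n hn
    obtain ⟨hNn, hnM⟩ := mem_Icc.1 hn
    have h := pow_mul_le_of_forall_mul_le hθ.le ih (n - 1) (by omega)
    rw [show M - (n - 1) = M + 1 - n by omega, mul_comm] at h
    rw [div_mul_eq_mul_div, le_div_iff₀ (by positivity), mul_assoc]
    exact mul_le_mul_of_nonneg_left h (pow_nonneg hc n)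
  calc θ * s M = q * s M - (q - θ) * s M := by ring
    _ ≤ q * s M - (∑ n ∈ Icc N (M + 1), c ^ n / θ ^ (n - 1)) * s M := by
      gcongr
      · exact hs M
      · exact htail _
    _ ≤ q * s M - ∑ n ∈ Icc N (M + 1), c ^ n * s (M + 1 - n) := by
      rw [sum_mul]
      exact sub_le_sub_left (sum_le_sum hterm) _
    _ ≤ s (M + 1) := by linarith [hrec M]

theorem exists_forall_sum_Icc_pow_div_pow_le {c ε : ℝ} (hc : 0 ≤ c) (hcθ : c < θ) (hε : 0 < ε) :
    ∃ N, 0 < N ∧ ∀ K, ∑ n ∈ Icc N K, c ^ n / θ ^ (n - 1) ≤ ε := by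
  have hθ : 0 < θ := hc.trans_lt hcθ
  set r := c / θ with hr
  have hr0 : 0 ≤ r := by positivity
  have hr1 : r < 1 := (div_lt_one hθ).2 hcθ
  obtain ⟨N, hN⟩ := exists_pow_lt_of_lt_one (show 0 < ε * (1 - r) / θ by
    have := sub_pos.2 hr1; positivity) hr1
  refine ⟨N + 1, N.succ_pos, fun K => ?_⟩
  have hterm : ∀ n ∈ Icc (N + 1) K, c ^ n / θ ^ (n - 1) = θ * r ^ n := by
    intro n hn
    obtain ⟨k, rfl⟩ : ∃ k, n = k + 1 := ⟨n - 1, by have := (mem_Icc.1 hn).1; omega⟩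
    rw [hr, div_pow, Nat.add_sub_cancel]
    field_simp
    ring
  calc ∑ n ∈ Icc (N + 1) K, c ^ n / θ ^ (n - 1) = θ * ∑ n ∈ Ico (N + 1) (K + 1), r ^ n := by
        rw [sum_congr rfl hterm, ← mul_sum, Ico_add_one_right_eq_Icc]
    _ ≤ θ * (r ^ (N + 1) / (1 - r)) := by gcongr; exact geom_sum_Ico_le_of_lt_one hr0 hr1
    _ ≤ θ * (r ^ N / (1 - r)) := by
      gcongr θ * (?_ / _)
      exact pow_le_pow_of_le_one hr0 hr1.le N.le_succ
    _ ≤ ε := by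
      rw [← le_div_iff₀' hθ, div_le_iff₀ (sub_pos.2 hr1)]
      have : ε * (1 - r) / θ = ε / θ * (1 - r) := by ring
      linarith

end Growth

section Words

variable [Inhabited A] {c : ℝ} {N M : ℕ}

def extendWord (w : Fin M → A) : ℕ → A :=
  fun p => if h : p < M then w ⟨p, h⟩ else default

theorem extendWord_of_lt {p : ℕ} (w : Fin M → A) (h : p < M) : extendWord w p = w ⟨p, h⟩ :=
  dif_pos h

theorem extendWord_take {m p : ℕ} (h : m ≤ M) (w : Fin M → A) (hp : p < m) :
    extendWord (Fin.take m h w) p = extendWord w p := by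
  rw [extendWord_of_lt _ hp, extendWord_of_lt _ (hp.trans_le h)]
  rfl

theorem extendWord_snoc {p : ℕ} (w : Fin M → A) (a : A) (hp : p < M) :
    extendWord (Fin.snoc w a : Fin (M + 1) → A) p = extendWord w p := by
  rw [extendWord_of_lt _ hp, extendWord_of_lt _ (by omega)]
  exact Fin.snoc_castSucc (α := fun _ => A) a w ⟨p, hp⟩

theorem eq_of_extendWord_eq {u v : Fin M → A} (h : ∀ p < M, extendWord u p = extendWord v p) :
    u = v :=
  funext fun t => by simpa only [extendWord_of_lt _ t.2] using h t t.2

variable [Fintype A]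

variable (A c N M) in
open Classical in
noncomputable def separatedWords : Finset (Fin M → A) :=
  univ.filter fun w => SeparatedUpTo c N M (extendWord w)

theorem mem_separatedWords {w : Fin M → A} :
    w ∈ separatedWords A c N M ↔ SeparatedUpTo c N M (extendWord w) := by
  simp [separatedWords]

theorem card_separatedWords_zero : #(separatedWords A c N 0) = 1 := by
  rw [card_eq_one]
  exact ⟨Fin.elim0, eq_singleton_iff_unique_mem.2
    ⟨mem_separatedWords.2 fun n i d _ hd _ hM => by omega, fun w _ => Subsingleton.elim _ _⟩⟩

/-- Restriction to the first `m` letters is injective on these words, since their last `n` letters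
are copied from `d` places earlier. -/
theorem card_le_card_separatedWords_of_repeatsAt {L m n d : ℕ} (hd : 0 < d) (hdm : d ≤ m)
    (hL : m + n = L) (W : Finset (Fin L → A))
    (hW : ∀ u ∈ W, SeparatedUpTo c N m (extendWord u) ∧ RepeatsAt (extendWord u) n (m - d) d) :
    #W ≤ #(separatedWords A c N m) := by
  have hmL : m ≤ L := by omega
  refine card_le_card_of_injOn (Fin.take m hmL) (fun u hu => ?_) fun u hu v hv huv => ?_
  · exact mem_separatedWords.2 <| (hW u hu).1.congr fun p hp => (extendWord_take _ _ hp).symm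
  · have hagree := (hW u hu).2.eq_of_eq_of_lt hd (hW v hv).2 fun p hp => by
      rw [← extendWord_take hmL u (by omega), ← extendWord_take hmL v (by omega), huv]
    exact eq_of_extendWord_eq fun p hp => hagree p (by omega)

/-- Each one-letter extension of a separated word of length `M` is either separated or has a
repeated block of some length `n ≥ N` ending at its last letter, at a distance `d ≤ ⌊c ^ n⌋₊`;
such a word is determined by `n`, `d` and its separated prefix of length `M + 1 - n`. -/
theorem card_mul_card_separatedWords_le :
    Fintype.card A * #(separatedWords A c N M) ≤ #(separatedWords A c N (M + 1)) +
      ∑ n ∈ Icc N (M + 1), ⌊c ^ n⌋₊ * #(separatedWords A c N (M + 1 - n)) := by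
  classical
  let snoc : (Fin M → A) × A → Fin (M + 1) → A := Function.uncurry (Fin.snoc (α := fun _ => A))
  let D n := (Icc 1 ⌊c ^ n⌋₊).filter fun d => n + d ≤ M + 1
  let E n d := univ.filter fun u : Fin (M + 1) → A =>
    SeparatedUpTo c N (M + 1 - n) (extendWord u) ∧ RepeatsAt (extendWord u) n (M + 1 - n - d) d
  have hcover : (separatedWords A c N M ×ˢ univ).image snoc ⊆
      separatedWords A c N (M + 1) ∪ (Icc N (M + 1)).biUnion fun n => (D n).biUnion (E n) := by
    rintro _ hu
    obtain ⟨⟨w, a⟩, hw, rfl⟩ := mem_image.1 hu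
    have hsep : SeparatedUpTo c N M (extendWord (snoc (w, a))) :=
      (mem_separatedWords.1 (mem_product.1 hw).1).congr fun p hp => (extendWord_snoc w a hp).symm
    by_cases h : SeparatedUpTo c N (M + 1) (extendWord (snoc (w, a)))
    · exact mem_union_left _ (mem_separatedWords.2 h)
    obtain ⟨n, d, hNn, hn, hd, hdc, hnd, hrep⟩ := hsep.exists_repeatsAt_of_not_succ h
    refine mem_union_right _ (mem_biUnion.2 ⟨n, mem_Icc.2 ⟨hNn, by omega⟩,
      mem_biUnion.2 ⟨d, mem_filter.2 ⟨mem_Icc.2 ⟨hd, Nat.le_floor hdc.le⟩, hnd⟩, ?_⟩⟩)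
    exact mem_filter.2 ⟨mem_univ _, hsep.mono (by omega), hrep⟩
  have hE : ∀ n, ∀ d ∈ D n, #(E n d) ≤ #(separatedWords A c N (M + 1 - n)) := fun n d hd => by
    obtain ⟨hd, hnd⟩ := mem_filter.1 hd
    exact card_le_card_separatedWords_of_repeatsAt (mem_Icc.1 hd).1 (by omega) (by omega) _
      fun u hu => (mem_filter.1 hu).2
  have hD : ∀ n, #(D n) ≤ ⌊c ^ n⌋₊ := fun n => (card_filter_le _ _).trans (by simp)
  calc Fintype.card A * #(separatedWords A c N M)
      = #((separatedWords A c N M ×ˢ univ).image snoc) := by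
        rw [card_image_of_injective _ Fin.snoc_injective2.uncurry, card_product, card_univ,
          mul_comm]
    _ ≤ #(separatedWords A c N (M + 1)) + ∑ n ∈ Icc N (M + 1), ∑ d ∈ D n, #(E n d) :=
        (card_le_card hcover).trans <| (card_union_le _ _).trans <| Nat.add_le_add_left
          (card_biUnion_le.trans <| sum_le_sum fun n _ => card_biUnion_le) _
    _ ≤ _ := Nat.add_le_add_left (sum_le_sum fun n _ =>
        (sum_le_card_nsmul _ _ _ (hE n)).trans (Nat.mul_le_mul_right _ (hD n))) _

variable (A) in
theorem exists_forall_separatedWords_nonempty (hc : 0 ≤ c) (hcA : c < Fintype.card A) :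
    ∃ N, ∀ M, (separatedWords A c N M).Nonempty := by
  set q : ℝ := (Fintype.card A : ℝ)
  have hθ : 0 < (c + q) / 2 := by linarith
  obtain ⟨N, hN, htail⟩ := exists_forall_sum_Icc_pow_div_pow_le (θ := (c + q) / 2) hc
    (by linarith) (show 0 < q - (c + q) / 2 by linarith)
  have hrec : ∀ M, q * #(separatedWords A c N M) ≤ #(separatedWords A c N (M + 1)) +
      ∑ n ∈ Icc N (M + 1), c ^ n * #(separatedWords A c N (M + 1 - n)) := fun M => by
    have h := (Nat.cast_le (α := ℝ)).2 <|
      card_mul_card_separatedWords_le (A := A) (c := c) (N := N) (M := M)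
    push_cast at h
    refine h.trans ?_
    gcongr with n
    exact Nat.floor_le (by positivity)
  have hgrowth := mul_le_succ_of_le_add_sum hN hc hθ (fun M => Nat.cast_nonneg _) htail hrec
  refine ⟨N, fun M => card_pos.1 ((Nat.cast_pos (α := ℝ)).1 ?_)⟩
  induction M with
  | zero => simp [card_separatedWords_zero]
  | succ M ih => exact (mul_pos hθ ih).trans_le (hgrowth M)

end Words

/-- **Separated occurrences (Beck/Mourad).** For every `c ∈ (1,2)` there are `N` and an
infinite binary sequence `α` such that any two occurrences of a common string of length
`n ≥ N` in `α` are at distance at least `c^n`. -/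
theorem separated_occurrences (c : ℝ) (hc1 : 1 < c) (hc2 : c < 2) :
    ∃ N : ℕ, ∃ α : ℕ → Bool, ∀ n i j : ℕ, N ≤ n →
      (List.ofFn fun t : Fin n => α (i + t)) =
        (List.ofFn fun t : Fin n => α (j + t)) →
      i = j ∨ c ^ n ≤ |(i : ℝ) - (j : ℝ)| := by
  obtain ⟨N, hN⟩ := exists_forall_separatedWords_nonempty Bool (c := c) (by linarith)
    (by simpa using hc2)
  obtain ⟨α, hα⟩ := exists_forall_separatedUpTo fun M =>
    ⟨_, mem_separatedWords.1 (hN M).choose_spec⟩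
  refine ⟨N, α, fun n i j hn hij => ?_⟩
  have hrep : ∀ t < n, α (i + t) = α (j + t) := fun t ht =>
    congrFun (List.ofFn_inj.1 hij) ⟨t, ht⟩
  rcases lt_trichotomy i j with h | h | h
  · refine Or.inr <| (pow_le_sub_of_forall_separatedUpTo hα hn h hrep).trans ?_
    rw [abs_sub_comm]
    exact le_abs_self _
  · exact Or.inl h
  · have := pow_le_sub_of_forall_separatedUpTo hα hn h fun t ht => (hrep t ht).symm
    exact Or.inr <| this.trans (le_abs_self _)
end

section
/- For every ε > 0 there exist N and an infinite binary sequence α such that for every n ≥ N and every position i, the adjacent blocks α(i)...α(i+n-1) and α(i+n)...α(i+2n-1) differ in at least (1/2 - ε)·n positions. -/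
/-!
Let the bad event `A(n, i)` on words of length `T` say that the blocks of length `n` at `i` and
`i + n` differ in fewer than `(1/2 - ε) n` places. Adding the first block to the second modulo 2
is a bijection turning the number of differences into the number of ones among `n` free bits, so
Chernoff's bound gives `ℙ(A(n, i)) ≤ ρⁿ` with `ρ = (1 - ε)(1 - 2ε)^{-(1/2 - ε)} < 1`.
`A(n, i)` depends only on the window `[i, i + 2n)`, which meets fewer than `2(n + m)` windows of
length `2m`; with weights `x(n, i) = ρ^{n/2}` the Lovász Local Lemma applies once `N` is large.
So good words of every length exist, and a cluster point of them in `Bool^ℕ` is good everywhere.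
-/

open Finset

section Independence

variable {ι β : Type*} [Fintype ι] [DecidableEq ι] [Fintype β] [DecidableEq β]

theorem card_inter_mul_card_eq_of_dependsOn {E F : Finset (ι → β)} {S : Set ι}
    (hE : DependsOn (· ∈ E) S) (hF : DependsOn (· ∈ F) Sᶜ) :
    #(E ∩ F) * Fintype.card (ι → β) = #E * #F := by
  classical
  -- exchanging the coordinates of a pair outside `S` matches `(E ∩ F) × univ` with `E × F`
  let swap (p : (ι → β) × (ι → β)) : (ι → β) × (ι → β) :=
    (S.piecewise p.1 p.2, S.piecewise p.2 p.1)
  have hswap : Function.Involutive swap := fun p => by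
    ext i <;> by_cases hi : i ∈ S <;> simp [swap, hi]
  have onS (f g : ι → β) : ∀ i ∈ S, S.piecewise f g i = f i := fun i hi => by simp [hi]
  have offS (f g : ι → β) : ∀ i ∈ Sᶜ, S.piecewise f g i = g i := fun i hi => by
    simp [Set.notMem_of_mem_compl hi]
  rw [← card_univ, ← card_product, ← card_product]
  refine card_nbij' swap swap ?_ ?_ (fun p _ => hswap p) (fun p _ => hswap p)
  · rintro ⟨ω, τ⟩ h
    simp only [coe_product, coe_inter, Set.mem_prod, Set.mem_inter_iff, mem_coe] at h ⊢
    exact ⟨(hE (onS ω τ)).mpr h.1.1, (hF (offS τ ω)).mpr h.1.2⟩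
  · rintro ⟨ω, τ⟩ h
    simp only [coe_product, coe_inter, coe_univ, Set.mem_prod, Set.mem_inter_iff, mem_coe,
      Set.mem_univ, and_true] at h ⊢
    exact ⟨(hE (onS ω τ)).mpr h.1, (hF (offS ω τ)).mpr h.2⟩

end Independence

namespace LovaszLocalLemma

section Neighbours

variable {ι κ : Type*} [DecidableEq ι] [DecidableEq κ]

def neighbours (I : Finset κ) (S : κ → Finset ι) (v : κ) : Finset κ :=
  {u ∈ I | u ≠ v ∧ ¬Disjoint (S u) (S v)}

lemma prod_one_sub_neighbours_le {I : Finset κ} {S : κ → Finset ι} {x : κ → ℝ}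
    (hx : ∀ v ∈ I, x v ∈ Set.Ico 0 1) {U : Finset κ} (hU : U ⊆ I) {v : κ} (hvU : v ∉ U) :
    ∏ u ∈ neighbours I S v, (1 - x u) ≤ ∏ u ∈ U with ¬Disjoint (S u) (S v), (1 - x u) := by
  refine prod_le_prod_of_subset_of_le_one (fun u hu => ?_) (fun u hu => ?_) (fun u hu _ => ?_)
  · have hu' := mem_filter.1 hu
    exact mem_filter.2 ⟨hU hu'.1, fun h => hvU (h ▸ hu'.1), hu'.2⟩
  · exact sub_nonneg.2 (hx u (mem_filter.1 hu).1).2.le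
  · exact sub_le_self _ (hx u (mem_filter.1 hu).1).1

end Neighbours

variable {ι β κ : Type*} [Fintype ι] [DecidableEq ι] [Fintype β] [DecidableEq β]
  (A : κ → Finset (ι → β))

def avoid (U : Finset κ) : Finset (ι → β) := {ω | ∀ u ∈ U, ω ∉ A u}

variable {A}

@[simp] lemma avoid_empty : avoid A ∅ = univ := by simp [avoid]

lemma avoid_anti {U V : Finset κ} (h : U ⊆ V) : avoid A V ⊆ avoid A U := by
  intro ω hω
  simp only [avoid, mem_filter, mem_univ, true_and] at hω ⊢
  exact fun u hu => hω u (h hu)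

lemma avoid_insert [DecidableEq κ] (u : κ) (U : Finset κ) :
    avoid A (insert u U) = avoid A U \ A u := by
  ext ω; simp [avoid, and_comm]

lemma dependsOn_mem_avoid {U : Finset κ} {T : Set ι} (h : ∀ u ∈ U, DependsOn (· ∈ A u) T) :
    DependsOn (· ∈ avoid A U) T := fun ω ω' hωω' => by
  simp only [avoid, mem_filter, mem_univ, true_and, eq_iff_iff]
  exact forall₂_congr fun u hu => not_congr (Eq.to_iff (h u hu hωω'))

lemma card_inter_avoid_mul_card_eq {S : κ → Finset ι} {E : Finset (ι → β)} {T : Finset ι}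
    {W : Finset κ} (hE : DependsOn (· ∈ E) T)
    (hW : ∀ u ∈ W, DependsOn (· ∈ A u) (S u) ∧ Disjoint (S u) T) :
    #(E ∩ avoid A W) * Fintype.card (ι → β) = #E * #(avoid A W) :=
  card_inter_mul_card_eq_of_dependsOn hE <| dependsOn_mem_avoid fun u hu =>
    (hW u hu).1.mono (Set.subset_compl_iff_disjoint_right.2 (disjoint_coe.2 (hW u hu).2))

lemma mul_card_avoid_le_card_avoid_insert [DecidableEq κ] {x : ℝ} {u : κ} {U : Finset κ}
    (h : (#(A u ∩ avoid A U) : ℝ) ≤ x * #(avoid A U)) :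
    (1 - x) * #(avoid A U) ≤ #(avoid A (insert u U)) := by
  have hsplit : (#(avoid A U \ A u) : ℝ) + #(A u ∩ avoid A U) = #(avoid A U) := by
    rw [inter_comm]; exact_mod_cast card_sdiff_add_card_inter _ _
  rw [avoid_insert]
  linarith

variable [DecidableEq κ]

lemma prod_one_sub_mul_card_avoid_le {x : κ → ℝ} (W : Finset κ) {D : Finset κ}
    (hx : ∀ u ∈ D, x u ≤ 1)
    (hstep : ∀ D' ⊆ D, ∀ u ∈ D \ D',
      (#(A u ∩ avoid A (W ∪ D')) : ℝ) ≤ x u * #(avoid A (W ∪ D'))) :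
    (∏ u ∈ D, (1 - x u)) * #(avoid A W) ≤ #(avoid A (W ∪ D)) := by
  induction D using Finset.induction_on with
  | empty => simp
  | insert a D ha ih =>
    have ih' := ih (fun u hu => hx u (mem_insert_of_mem hu)) fun D' hD' u hu =>
      hstep D' (hD'.trans (subset_insert _ _)) u (sdiff_subset_sdiff (subset_insert _ _) le_rfl hu)
    rw [prod_insert ha, union_insert, mul_assoc]
    calc (1 - x a) * ((∏ u ∈ D, (1 - x u)) * #(avoid A W))
        ≤ (1 - x a) * #(avoid A (W ∪ D)) :=
          mul_le_mul_of_nonneg_left ih' (sub_nonneg.2 (hx a (mem_insert_self _ _)))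
      _ ≤ _ := mul_card_avoid_le_card_avoid_insert
          (hstep D (subset_insert _ _) a (by simp [ha]))

variable [Nonempty β] {I : Finset κ} {S : κ → Finset ι} {x : κ → ℝ}

lemma card_inter_avoid_le (hdep : ∀ v ∈ I, DependsOn (· ∈ A v) (S v))
    (hx : ∀ v ∈ I, x v ∈ Set.Ico 0 1)
    (hA : ∀ v ∈ I, (#(A v) : ℝ) ≤
      x v * (∏ u ∈ neighbours I S v, (1 - x u)) * Fintype.card (ι → β))
    {U : Finset κ} (hU : U ⊆ I) {v : κ} (hv : v ∈ I) (hvU : v ∉ U) :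
    (#(A v ∩ avoid A U) : ℝ) ≤ x v * #(avoid A U) := by
  induction U using Finset.strongInduction generalizing v with
  | H U ih =>
  -- `A v` is independent of avoiding the events `W` away from `v`, and by induction avoiding
  -- the remaining events `D` costs at most a factor `∏ u ∈ D, (1 - x u)`
  set D := U.filter fun u => ¬Disjoint (S u) (S v)
  set W := U.filter fun u => Disjoint (S u) (S v)
  have hWD : W ∪ D = U := filter_union_filter_not_eq _ _
  have hDI : D ⊆ I := (filter_subset _ _).trans hU
  have hindep : (#(A v ∩ avoid A W) * Fintype.card (ι → β) : ℝ) = #(A v) * #(avoid A W) :=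
    mod_cast card_inter_avoid_mul_card_eq (hdep v hv) fun u hu =>
      ⟨hdep u (hU (mem_filter.1 hu).1), (mem_filter.1 hu).2⟩
  have hchain : (∏ u ∈ D, (1 - x u)) * #(avoid A W) ≤ #(avoid A U) := by
    rw [← hWD]
    refine prod_one_sub_mul_card_avoid_le W (fun u hu => (hx u (hDI hu)).2.le) fun D' hD' u hu => ?_
    obtain ⟨huD, huD'⟩ := mem_sdiff.1 hu
    have huW : u ∉ W := fun huW => (mem_filter.1 huD).2 (mem_filter.1 huW).2
    have hsub : W ∪ D' ⊂ U := by
      rw [← hWD]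
      exact ssubset_iff_of_subset (union_subset_union le_rfl hD') |>.2
        ⟨u, mem_union_right _ huD, by simp [huW, huD']⟩
    exact ih _ hsub (hsub.subset.trans hU) (hDI huD) (by simp [huW, huD'])
  have hxv := (hx v hv).1
  have hcard : (0 : ℝ) < Fintype.card (ι → β) := by exact_mod_cast Fintype.card_pos
  refine le_of_mul_le_mul_right ?_ hcard
  calc (#(A v ∩ avoid A U) : ℝ) * Fintype.card (ι → β)
      ≤ #(A v ∩ avoid A W) * Fintype.card (ι → β) := by
        gcongr
        exact avoid_anti (filter_subset _ _)
    _ = #(A v) * #(avoid A W) := hindep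
    _ ≤ x v * (∏ u ∈ D, (1 - x u)) * Fintype.card (ι → β) * #(avoid A W) := by
        have hprod := prod_one_sub_neighbours_le (S := S) hx hU hvU
        gcongr
        exact (hA v hv).trans (by gcongr)
    _ = x v * Fintype.card (ι → β) * ((∏ u ∈ D, (1 - x u)) * #(avoid A W)) := by ring
    _ ≤ x v * Fintype.card (ι → β) * #(avoid A U) := by gcongr
    _ = x v * #(avoid A U) * Fintype.card (ι → β) := by ring

theorem exists_forall_notMem (hdep : ∀ v ∈ I, DependsOn (· ∈ A v) (S v))
    (hx : ∀ v ∈ I, x v ∈ Set.Ico 0 1)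
    (hA : ∀ v ∈ I, (#(A v) : ℝ) ≤
      x v * (∏ u ∈ neighbours I S v, (1 - x u)) * Fintype.card (ι → β)) :
    ∃ ω, ∀ v ∈ I, ω ∉ A v := by
  have hchain := prod_one_sub_mul_card_avoid_le ∅ (fun u hu => (hx u hu).2.le) fun D' hD' u hu => by
    rw [empty_union]
    exact card_inter_avoid_le hdep hx hA hD' (mem_sdiff.1 hu).1 (mem_sdiff.1 hu).2
  rw [empty_union, avoid_empty, card_univ] at hchain
  have hpos : (0 : ℝ) < #(avoid A I) :=
    lt_of_lt_of_le (mul_pos (prod_pos fun u hu => sub_pos.2 (hx u hu).2)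
      (by exact_mod_cast Fintype.card_pos)) hchain
  obtain ⟨ω, hω⟩ := card_pos.1 (by exact_mod_cast hpos)
  exact ⟨ω, (mem_filter.1 hω).2⟩

end LovaszLocalLemma

theorem sum_pow_card_filter_true {ι R : Type*} [Fintype ι] [DecidableEq ι] [CommSemiring R]
    (B : Finset ι) (x : R) :
    ∑ ω : ι → Bool, x ^ #{s ∈ B | ω s} = (1 + x) ^ #B * 2 ^ (Fintype.card ι - #B) := by
  let f (s : ι) (b : Bool) : R := if s ∈ B ∧ b then x else 1
  have hf (ω : ι → Bool) : x ^ #{s ∈ B | ω s} = ∏ s, f s (ω s) := by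
    rw [prod_ite, prod_const_one, mul_one, prod_const]
    congr 2
    ext; simp
  have hsum (s : ι) : ∑ b, f s b = if s ∈ B then 1 + x else 2 := by
    by_cases hs : s ∈ B <;> simp [f, hs, add_comm]
  simp_rw [hf, ← Fintype.prod_sum, hsum, prod_ite, prod_const, ← card_compl]
  congr 3 <;> ext <;> simp

def adjDist (α : ℕ → Bool) (n i : ℕ) : ℕ := #{j ∈ range n | α (i + j) ≠ α (i + n + j)}

lemma adjDist_congr {α α' : ℕ → Bool} {n i : ℕ}
    (h : ∀ a, i ≤ a → a < i + 2 * n → α a = α' a) : adjDist α n i = adjDist α' n i := by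
  refine congrArg card (filter_congr fun j hj => ?_)
  rw [mem_range] at hj
  rw [h (i + j) (by omega) (by omega), h (i + n + j) (by omega) (by omega)]

def flipSeq (n i : ℕ) (α : ℕ → Bool) (a : ℕ) : Bool :=
  if i + n ≤ a ∧ a < i + 2 * n then xor (α a) (α (a - n)) else α a

lemma flipSeq_flipSeq (n i : ℕ) (α : ℕ → Bool) : flipSeq n i (flipSeq n i α) = α := by
  funext a
  by_cases ha : i + n ≤ a ∧ a < i + 2 * n
  · have : ¬(i + n ≤ a - n ∧ a - n < i + 2 * n) := by omega
    simp [flipSeq, ha, this]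
  · simp [flipSeq, ha]

lemma adjDist_flipSeq (n i : ℕ) (α : ℕ → Bool) :
    adjDist (flipSeq n i α) n i = #{j ∈ range n | α (i + n + j)} := by
  refine congrArg card (filter_congr fun j hj => ?_)
  rw [mem_range] at hj
  have h₁ : ¬(i + n ≤ i + j ∧ i + j < i + 2 * n) := by omega
  have h₂ : i + n ≤ i + n + j ∧ i + n + j < i + 2 * n := by omega
  simp only [flipSeq, h₁, h₂, if_false, show i + n + j - n = i + j by omega]
  cases α (i + j) <;> cases α (i + n + j) <;> decide

def toSeq {T : ℕ} (ω : Fin T → Bool) (a : ℕ) : Bool := if h : a < T then ω ⟨a, h⟩ else false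

@[simp] lemma toSeq_val {T : ℕ} (ω : Fin T → Bool) (s : Fin T) : toSeq ω s = ω s := by
  simp [toSeq]

lemma toSeq_injective (T : ℕ) : Function.Injective (toSeq (T := T)) := fun ω ω' h =>
  funext fun s => by simpa using congrFun h s

section Window

variable {T n i : ℕ}

def flipBlock (n i : ℕ) (ω : Fin T → Bool) (s : Fin T) : Bool := flipSeq n i (toSeq ω) s

lemma toSeq_flipBlock (h : i + 2 * n ≤ T) (ω : Fin T → Bool) :
    toSeq (flipBlock n i ω) = flipSeq n i (toSeq ω) := by
  funext a
  by_cases ha : a < T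
  · simp [toSeq, flipBlock, ha]
  · have : ¬(i + n ≤ a ∧ a < i + 2 * n) := by omega
    simp [toSeq, flipSeq, ha, this]

lemma flipBlock_involutive (h : i + 2 * n ≤ T) : Function.Involutive (flipBlock (T := T) n i) :=
  fun ω => toSeq_injective T (by rw [toSeq_flipBlock h, toSeq_flipBlock h, flipSeq_flipSeq])

def block (T a n : ℕ) : Finset (Fin T) := {s | a ≤ s ∧ (s : ℕ) < a + n}

lemma card_filter_block {a : ℕ} (h : a + n ≤ T) (q : ℕ → Prop) [DecidablePred q] :
    #{s ∈ block T a n | q s.val} = #{j ∈ range n | q (a + j)} := by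
  refine card_bij' (fun s _ => s - a)
    (fun j hj => ⟨a + j, by simp only [mem_filter, mem_range] at hj; omega⟩) ?_ ?_ ?_ ?_
  · intro s hs
    simp only [block, mem_filter, mem_univ, true_and, mem_range] at hs ⊢
    exact ⟨by omega, by rw [Nat.add_sub_cancel' hs.1.1]; exact hs.2⟩
  · intro j hj
    simp only [block, mem_filter, mem_univ, true_and, mem_range] at hj ⊢
    exact ⟨by omega, hj.2⟩
  · intro s hs
    simp only [block, mem_filter, mem_univ, true_and] at hs
    exact Fin.ext (by simp; omega)
  · intro j _
    simp

lemma card_block {a : ℕ} (h : a + n ≤ T) : #(block T a n) = n := by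
  simpa using card_filter_block h (fun _ => True)

theorem sum_pow_adjDist {R : Type*} [CommSemiring R] (h : i + 2 * n ≤ T) (x : R) :
    ∑ ω : Fin T → Bool, x ^ adjDist (toSeq ω) n i = (1 + x) ^ n * 2 ^ (T - n) := by
  have hB : i + n + n ≤ T := by omega
  calc ∑ ω : Fin T → Bool, x ^ adjDist (toSeq ω) n i
      = ∑ ω : Fin T → Bool, x ^ adjDist (toSeq (flipBlock n i ω)) n i :=
        (Equiv.sum_comp ((flipBlock_involutive h).toPerm _) _).symm
    _ = ∑ ω : Fin T → Bool, x ^ #{s ∈ block T (i + n) n | ω s} := by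
        refine sum_congr rfl fun ω _ => ?_
        rw [toSeq_flipBlock h, adjDist_flipSeq, ← card_filter_block hB (toSeq ω · = true)]
        simp
    _ = (1 + x) ^ n * 2 ^ (T - n) := by
        rw [sum_pow_card_filter_true, card_block hB, Fintype.card_fin]

theorem card_adjDist_lt_mul_rpow_le (h : i + 2 * n ≤ T) {c x : ℝ} (hx0 : 0 < x) (hx1 : x ≤ 1) :
    #{ω : Fin T → Bool | (adjDist (toSeq ω) n i : ℝ) < c * n} * x ^ (c * n) ≤
      (1 + x) ^ n * 2 ^ (T - n) := by
  rw [← sum_pow_adjDist h, ← nsmul_eq_mul, ← sum_const]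
  calc ∑ ω ∈ {ω : Fin T → Bool | (adjDist (toSeq ω) n i : ℝ) < c * n}, x ^ (c * n)
      ≤ ∑ ω ∈ {ω : Fin T → Bool | (adjDist (toSeq ω) n i : ℝ) < c * n}, x ^ adjDist (toSeq ω) n i :=
        sum_le_sum fun ω hω => by
          rw [← Real.rpow_natCast]
          exact Real.rpow_le_rpow_of_exponent_ge hx0 hx1 (mem_filter.1 hω).2.le
    _ ≤ ∑ ω : Fin T → Bool, x ^ adjDist (toSeq ω) n i :=
        sum_le_sum_of_subset_of_nonneg (subset_univ _) fun _ _ _ => by positivity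

end Window

section Estimates

open Real Filter

lemma exp_neg_two_mul_le_one_sub {y : ℝ} (h0 : 0 ≤ y) (h1 : y ≤ 1 / 2) :
    exp (-(2 * y)) ≤ 1 - y := by
  rw [exp_neg, inv_le_iff_one_le_mul₀ (exp_pos _)]
  nlinarith [add_one_le_exp (2 * y)]

lemma eventually_pow_le_prod_one_sub_pow {σ : ℝ} (h0 : 0 < σ) (h1 : σ < 1) :
    ∀ᶠ N in atTop, ∀ n, 0 < n → ∀ M,
      σ ^ n ≤ ∏ m ∈ Ico N M, (1 - σ ^ m) ^ (2 * (n + m)) := by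
  set f : ℕ → ℝ := fun m => (m + 1) * σ ^ m
  have hf : Summable f := by
    have := (summable_pow_mul_geometric_of_norm_lt_one 1 (r := σ)
      (by rwa [norm_of_nonneg h0.le])).add (summable_geometric_of_lt_one h0.le h1)
    simpa [f, add_mul] using this
  have hlog : 0 < -log σ := neg_pos.2 (log_neg h0 h1)
  have htail := (tendsto_sum_nat_add f).eventually (ge_mem_nhds (div_pos hlog four_pos))
  have hsmall := (tendsto_pow_atTop_nhds_zero_of_lt_one h0.le h1).eventually
    (ge_mem_nhds (one_half_pos (α := ℝ)))
  filter_upwards [htail, hsmall] with N hN hσN n hn M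
  have hsum : ∑ m ∈ Ico N M, f m ≤ -log σ / 4 := by
    refine le_trans ?_ hN
    rw [sum_Ico_eq_sum_range]
    simp_rw [add_comm N]
    exact ((summable_nat_add_iff N).2 hf).sum_le_tsum _ fun _ _ => by positivity
  calc σ ^ n = exp (n * log σ) := by rw [exp_nat_mul, exp_log h0]
    _ ≤ exp (-∑ m ∈ Ico N M, (2 * (n + m) : ℕ) * (2 * σ ^ m)) := by
        have hn' : (1 : ℝ) ≤ n := by exact_mod_cast hn
        have hterm : ∀ m ∈ Ico N M, ((2 * (n + m) : ℕ) : ℝ) * (2 * σ ^ m) ≤ 4 * n * f m :=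
          fun m _ => by
            have : (n + m : ℝ) ≤ n * (m + 1) := by nlinarith [(m.cast_nonneg : (0 : ℝ) ≤ m)]
            push_cast
            nlinarith [pow_pos h0 m]
        have := (sum_le_sum hterm).trans_eq (mul_sum _ _ _).symm
        gcongr
        nlinarith
    _ = ∏ m ∈ Ico N M, exp (-(2 * σ ^ m)) ^ (2 * (n + m)) := by
        rw [← sum_neg_distrib, exp_sum]
        refine prod_congr rfl fun m _ => ?_
        rw [← exp_nat_mul, mul_neg]
    _ ≤ ∏ m ∈ Ico N M, (1 - σ ^ m) ^ (2 * (n + m)) := by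
        refine prod_le_prod (fun _ _ => by positivity) fun m hm => pow_le_pow_left₀ (exp_pos _).le
          (exp_neg_two_mul_le_one_sub (by positivity) ?_) _
        exact (pow_le_pow_of_le_one h0.le h1.le (mem_Ico.1 hm).1).trans hσN

/-- The Chernoff rate `(1 - ε) (1 - 2ε)^{-(1/2 - ε)}` of `ℙ(Bin(n, 1/2) < (1/2 - ε) n)`, obtained
from the exponential moment with base `1 - 2ε`. -/
noncomputable def rate (ε : ℝ) : ℝ := (1 - ε) * (1 - 2 * ε) ^ (-(1 / 2 - ε))

variable {ε : ℝ}

lemma rate_pos (hε2 : ε < 1 / 2) : 0 < rate ε :=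
  mul_pos (by linarith) (rpow_pos_of_pos (by linarith) _)

lemma rate_lt_one (hε : 0 < ε) (hε2 : ε < 1 / 2) : rate ε < 1 := by
  have h₁ : 0 < 1 - 2 * ε := by linarith
  rw [← log_neg_iff (rate_pos hε2), rate, log_mul (by linarith) (rpow_pos_of_pos h₁ _).ne',
    log_rpow h₁]
  have hl₁ : log (1 - ε) < -ε := by
    linarith [log_lt_sub_one_of_pos (by linarith : 0 < 1 - ε) (by linarith)]
  have hl₂ : 1 - (1 - 2 * ε)⁻¹ ≤ log (1 - 2 * ε) := one_sub_inv_le_log_of_pos h₁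
  have : (1 / 2 - ε) * (1 - (1 - 2 * ε)⁻¹) = -ε := by field_simp; ring
  nlinarith

lemma card_adjDist_lt_le_rate_pow {T n i : ℕ} (h : i + 2 * n ≤ T) (hε : 0 < ε) (hε2 : ε < 1 / 2) :
    (#{ω : Fin T → Bool | (adjDist (toSeq ω) n i : ℝ) < (1 / 2 - ε) * n} : ℝ) ≤
      rate ε ^ n * 2 ^ T := by
  have hx : 0 < 1 - 2 * ε := by linarith
  refine le_of_mul_le_mul_right ?_ (rpow_pos_of_pos hx ((1 / 2 - ε) * n))
  refine (card_adjDist_lt_mul_rpow_le h hx (by linarith)).trans_eq ?_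
  have e₁ : (1 - 2 * ε) ^ (-(1 / 2 - ε) * n) * (1 - 2 * ε) ^ ((1 / 2 - ε) * n) = 1 := by
    rw [← rpow_add hx, neg_mul, neg_add_cancel, rpow_zero]
  have e₂ : (2 : ℝ) ^ (T - n) * 2 ^ n = 2 ^ T := pow_sub_mul_pow _ (by omega)
  have e₃ : (1 + (1 - 2 * ε)) ^ n = 2 ^ n * (1 - ε) ^ n := by rw [← mul_pow]; ring_nf
  rw [rate, mul_pow, ← rpow_mul_natCast hx.le, ← e₂, e₃]
  linear_combination (-(1 - ε) ^ n * 2 ^ (T - n) * 2 ^ n) * e₁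

end Estimates

lemma prod_pow_le_prod_of_overlapping {g : ℕ → ℝ} (hg0 : ∀ m, 0 ≤ g m) (hg1 : ∀ m, g m ≤ 1)
    {N M n i : ℕ} {V : Finset (ℕ × ℕ)}
    (hV : ∀ u ∈ V, u.1 ∈ Ico N M ∧ u.2 < i + 2 * n ∧ i < u.2 + 2 * u.1) :
    ∏ m ∈ Ico N M, g m ^ (2 * (n + m)) ≤ ∏ u ∈ V, g u.1 := by
  have hfiber (m : ℕ) : #{u ∈ V | u.1 = m} ≤ 2 * (n + m) := by
    -- a window of length `2m` overlapping `[i, i + 2n)` starts in `(i - 2m, i + 2n)`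
    calc #{u ∈ V | u.1 = m} ≤ #(Ico (i + 1 - 2 * m) (i + 2 * n)) := by
          refine card_le_card_of_injOn Prod.snd (fun u hu => ?_) fun u hu u' hu' h => ?_
          · obtain ⟨huV, rfl⟩ := mem_filter.1 hu
            have := hV u huV
            simp only [coe_Ico, Set.mem_Ico]
            omega
          · exact Prod.ext ((mem_filter.1 hu).2.trans (mem_filter.1 hu').2.symm) h
      _ ≤ 2 * (n + m) := by simp only [Nat.card_Ico]; omega
  rw [prod_comp g Prod.fst]
  calc ∏ m ∈ Ico N M, g m ^ (2 * (n + m))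
      ≤ ∏ m ∈ V.image Prod.fst, g m ^ (2 * (n + m)) :=
        prod_le_prod_of_subset_of_le_one (image_subset_iff.2 fun u hu => (hV u hu).1)
          (fun _ _ => pow_nonneg (hg0 _) _) fun _ _ _ => pow_le_one₀ (hg0 _) (hg1 _)
    _ ≤ ∏ m ∈ V.image Prod.fst, g m ^ #{u ∈ V | u.1 = m} :=
        prod_le_prod (fun _ _ => pow_nonneg (hg0 _) _) fun m _ =>
          pow_le_pow_of_le_one (hg0 m) (hg1 m) (hfiber m)

lemma dependsOn_adjDist_toSeq {T n i : ℕ} (h : i + 2 * n ≤ T) :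
    DependsOn (fun ω : Fin T → Bool => adjDist (toSeq ω) n i) (block T i (2 * n)) :=
  fun ω ω' hωω' => adjDist_congr fun a h₁ h₂ => by
    have ha : a < T := by omega
    simpa [toSeq, ha] using hωω' ⟨a, ha⟩ (by simp [block, h₁, h₂])

def windows (N T : ℕ) : Finset (ℕ × ℕ) :=
  {v ∈ range (T + 1) ×ˢ range (T + 1) | N ≤ v.1 ∧ v.2 + 2 * v.1 ≤ T}

lemma mem_windows {N T : ℕ} {v : ℕ × ℕ} : v ∈ windows N T ↔ N ≤ v.1 ∧ v.2 + 2 * v.1 ≤ T := by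
  simp only [windows, mem_filter, mem_product, mem_range, and_iff_right_iff_imp]
  omega

lemma prod_pow_le_prod_neighbours {σ : ℝ} (h0 : 0 ≤ σ) (h1 : σ ≤ 1) {N T n i : ℕ} :
    ∏ m ∈ Ico N (T + 1), (1 - σ ^ m) ^ (2 * (n + m)) ≤
      ∏ u ∈ LovaszLocalLemma.neighbours (windows N T) (fun v => block T v.2 (2 * v.1)) (n, i),
        (1 - σ ^ u.1) := by
  refine prod_pow_le_prod_of_overlapping (i := i) (fun m => sub_nonneg.2 (pow_le_one₀ h0 h1))
    (fun m => sub_le_self _ (pow_nonneg h0 m)) fun u hu => ?_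
  obtain ⟨hu, -, hov⟩ := mem_filter.1 hu
  obtain ⟨s, hs₁, hs₂⟩ := not_disjoint_iff.1 hov
  have := mem_windows.1 hu
  simp only [block, mem_filter, mem_univ, true_and] at hs₁ hs₂
  simp only [mem_Ico]
  omega

theorem exists_words_adjDist_ge {ε : ℝ} (hε : 0 < ε) (hε2 : ε < 1 / 2) :
    ∃ N, ∀ T, ∃ ω : Fin T → Bool, ∀ n i, N ≤ n → i + 2 * n ≤ T →
      (1 / 2 - ε) * n ≤ adjDist (toSeq ω) n i := by
  set σ := √(rate ε)
  have hσ0 : 0 < σ := Real.sqrt_pos.2 (rate_pos hε2)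
  have hσ1 : σ < 1 := (Real.sqrt_lt' one_pos).2 (by simpa using rate_lt_one hε hε2)
  obtain ⟨N, hN, hN0⟩ :=
    ((eventually_pow_le_prod_one_sub_pow hσ0 hσ1).and (Filter.eventually_gt_atTop 0)).exists
  refine ⟨N, fun T => ?_⟩
  set A : ℕ × ℕ → Finset (Fin T → Bool) :=
    fun v => {ω | (adjDist (toSeq ω) v.1 v.2 : ℝ) < (1 / 2 - ε) * v.1}
  set S : ℕ × ℕ → Finset (Fin T) := fun v => block T v.2 (2 * v.1)
  have hdep : ∀ v ∈ windows N T, DependsOn (· ∈ A v) (S v) := by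
    rintro ⟨n, i⟩ hv ω ω' hωω'
    simp only [A, mem_filter, mem_univ, true_and,
      dependsOn_adjDist_toSeq (mem_windows.1 hv).2 hωω']
  have hx : ∀ v ∈ windows N T, σ ^ v.1 ∈ Set.Ico 0 1 := by
    rintro ⟨n, i⟩ hv
    exact ⟨pow_nonneg hσ0.le n,
      pow_lt_one₀ hσ0.le hσ1 (by have := (mem_windows.1 hv).1; omega)⟩
  have hA : ∀ v ∈ windows N T, (#(A v) : ℝ) ≤ σ ^ v.1 *
      (∏ u ∈ LovaszLocalLemma.neighbours (windows N T) S v, (1 - σ ^ u.1)) *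
        Fintype.card (Fin T → Bool) := by
    rintro ⟨n, i⟩ hv
    obtain ⟨hn, hT⟩ := mem_windows.1 hv
    calc (#(A (n, i)) : ℝ) ≤ rate ε ^ n * 2 ^ T := card_adjDist_lt_le_rate_pow hT hε hε2
      _ = σ ^ n * σ ^ n * 2 ^ T := by rw [← mul_pow, Real.mul_self_sqrt (rate_pos hε2).le]
      _ ≤ σ ^ n * (∏ m ∈ Ico N (T + 1), (1 - σ ^ m) ^ (2 * (n + m))) * 2 ^ T := by
          gcongr
          exact hN n (by omega) (T + 1)
      _ ≤ _ := by
          rw [Fintype.card_fun, Fintype.card_bool, Fintype.card_fin, Nat.cast_pow, Nat.cast_ofNat]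
          gcongr
          exact prod_pow_le_prod_neighbours hσ0.le hσ1.le
  obtain ⟨ω, hω⟩ := LovaszLocalLemma.exists_forall_notMem hdep hx hA
  exact ⟨ω, fun n i hn hT => by simpa [A] using hω (n, i) (mem_windows.2 ⟨hn, hT⟩)⟩

open Filter in
theorem exists_forall_frequently_prefix_eq {β : Type*} [Finite β] (u : ℕ → ℕ → β) :
    ∃ α : ℕ → β, ∀ M, ∃ᶠ T in atTop, ∀ a < M, u T a = α a := by
  let _ : TopologicalSpace β := ⊥
  have : DiscreteTopology β := ⟨rfl⟩
  obtain ⟨α, -, hα⟩ := isCompact_univ.exists_mapClusterPt (f := atTop) (u := u) (by simp)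
  refine ⟨α, fun M => ?_⟩
  have hopen : IsOpen ((Set.Iio M).pi fun a => {α a}) :=
    isOpen_set_pi (Set.finite_Iio M) fun _ _ => isOpen_discrete _
  simpa [Set.mem_pi] using mapClusterPt_iff_frequently.1 hα _ (hopen.mem_nhds (by simp))

/-- **Adjacent blocks are very different.** For every `ε > 0` there are `N` and an
infinite binary sequence `α` such that any two adjacent blocks of length `n ≥ N`
differ in at least `(1/2 - ε)·n` positions. -/
theorem adjacent_blocks_differ (ε : ℝ) (hε : 0 < ε) :
    ∃ N : ℕ, ∃ α : ℕ → Bool, ∀ n i : ℕ, N ≤ n →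
      (1 / 2 - ε) * n ≤
        ((Finset.range n).filter (fun j => α (i + j) ≠ α (i + n + j))).card := by
  rcases lt_or_ge ε (1 / 2) with hε2 | hε2
  · obtain ⟨N, hword⟩ := exists_words_adjDist_ge hε hε2
    choose w hw using hword
    obtain ⟨α, hα⟩ := exists_forall_frequently_prefix_eq fun T => toSeq (w T)
    refine ⟨N, α, fun n i hn => ?_⟩
    obtain ⟨T, hwα, hT⟩ :=
      ((hα (i + 2 * n)).and_eventually (Filter.eventually_ge_atTop (i + 2 * n))).exists
    have := hw T n i hn hT
    rwa [adjDist_congr fun a _ ha => hwα a ha] at this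
  · exact ⟨0, fun _ => false, fun n i _ => (mul_nonpos_of_nonpos_of_nonneg (by linarith)
      n.cast_nonneg).trans (Nat.cast_nonneg _)⟩
end

section
/- Fix k ≥ 3 and set ε = 2^{-k}. Let t be a positive integer with 2^{m-2} < t ≤ 2^{m-1}. Then within any single dyadic interval of length 2^{-m}, at most 3 of its dyadic subintervals of length 2^{-(m+k-2)} contain a point whose distance to some rational with denominator t is at most ε/t. Equivalently, the set {x : d(tx, ℤ) ≤ 2^{-k}} meets at most 3 of the 2^{k-2} dyadic subintervals of level m+k-2 inside any fixed dyadic interval of level m. -/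
/-!
Points `x, y` of the same dyadic interval of level `m` satisfy `t |x - y| ≤ t / 2^m ≤ 1/2`. If
`tx` and `ty` are both within `ε < 1/4` of integers, it is therefore the same integer, and
`t |x - y| ≤ 2ε = 2^{1-k}`. But points of two subintervals of level `m + k - 2` that are three or
more indices apart have `|x - y| ≥ 2 / 2^{m+k-2}`, hence `t |x - y| > 2^{m-2} · 2^{3-m-k} = 2^{1-k}`.
So the bad indices lie in a window of length `2`.
-/

open Set

theorem Set.ncard_le_add_one_of_forall_le_add {S : Set ℕ} {d : ℕ}
    (h : ∀ a ∈ S, ∀ b ∈ S, b ≤ a + d) : S.ncard ≤ d + 1 := by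
  rcases S.eq_empty_or_nonempty with rfl | hne
  · simp
  have hsub : S ⊆ Icc (sInf S) (sInf S + d) := fun b hb ↦
    ⟨Nat.sInf_le hb, h _ (Nat.sInf_mem hne) b hb⟩
  calc S.ncard ≤ (Icc (sInf S) (sInf S + d)).ncard := ncard_le_ncard hsub (finite_Icc _ _)
    _ = d + 1 := by rw [Set.ncard_Icc_nat]; omega

theorem abs_sub_le_two_mul_of_near_int {a b ε : ℝ} {z w : ℤ} (ha : |a - z| ≤ ε)
    (hb : |b - w| ≤ ε) (hab : |a - b| + 2 * ε < 1) : |a - b| ≤ 2 * ε := by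
  obtain ⟨ha₁, ha₂⟩ := abs_le.mp ha
  obtain ⟨hb₁, hb₂⟩ := abs_le.mp hb
  have hzw : z = w := by
    have : |((z - w : ℤ) : ℝ)| < 1 := by
      push_cast
      exact abs_lt.mpr ⟨by linarith [neg_abs_le (a - b)], by linarith [le_abs_self (a - b)]⟩
    exact sub_eq_zero.mp (Int.abs_lt_one_iff.mp (by exact_mod_cast this))
  subst hzw
  exact abs_le.mpr ⟨by linarith, by linarith⟩

theorem dyadic_index_lt_add_three_of_near_int {P Q t ε a s s' x y : ℝ} {z w : ℤ}
    (ht_low : P / 4 < t) (ht_high : t ≤ P / 2) (hε : ε ≤ 1 / (4 * Q))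
    (hs : 0 ≤ s) (hs' : s' + 1 ≤ Q)
    (hx : x ∈ Icc ((a + s) / (P * Q)) ((a + s + 1) / (P * Q)))
    (hy : y ∈ Icc ((a + s') / (P * Q)) ((a + s' + 1) / (P * Q)))
    (hz : |t * x - z| ≤ ε) (hw : |t * y - w| ≤ ε) : s' < s + 3 := by
  by_contra! hgap
  have hQ : 4 ≤ Q := by linarith
  have hP : 0 < P := by linarith
  have hPQ : 0 < P * Q := by positivity
  obtain ⟨hx₁, hx₂⟩ := hx
  obtain ⟨hy₁, hy₂⟩ := hy
  rw [div_le_iff₀ hPQ] at hx₁ hy₁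
  rw [le_div_iff₀ hPQ] at hx₂ hy₂
  have hd_low : 2 ≤ (y - x) * (P * Q) := by linarith
  have hd_high : (y - x) * (P * Q) ≤ Q := by linarith
  have hd_pos : 0 < y - x := pos_of_mul_pos_left (by linarith) hPQ.le
  have hε' : 2 * ε ≤ 1 / (2 * Q) := by
    calc 2 * ε ≤ 2 * (1 / (4 * Q)) := by gcongr
      _ = 1 / (2 * Q) := by field_simp; ring
  have hgap_far : 1 / (2 * Q) < t * y - t * x := by
    rw [div_lt_iff₀ (by positivity)]
    nlinarith
  have hgap_near : t * y - t * x ≤ 1 / 2 := by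
    nlinarith
  have hε8 : 1 / (2 * Q) ≤ 1 / 8 := by
    rw [div_le_div_iff₀ (by positivity) (by norm_num)]; linarith
  have hpos : 0 < t * y - t * x := by rw [← mul_sub]; exact mul_pos (by linarith) hd_pos
  have hnear := abs_sub_le_two_mul_of_near_int hw hz
  rw [abs_of_pos hpos] at hnear
  linarith [hnear (by linarith)]

theorem bad_index_le_add_two {k t m : ℕ} (htlow : (2 : ℝ) ^ ((m : ℤ) - 2) < t)
    (hthigh : (t : ℝ) ≤ 2 ^ ((m : ℤ) - 1)) {u : ℤ} {s s' : ℕ} (hs' : s' < 2 ^ (k - 2)) {x y : ℝ}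
    (hx : x ∈ Icc (((u : ℝ) * 2 ^ (k - 2) + s) / 2 ^ (m + k - 2))
      (((u : ℝ) * 2 ^ (k - 2) + s + 1) / 2 ^ (m + k - 2)))
    (hy : y ∈ Icc (((u : ℝ) * 2 ^ (k - 2) + s') / 2 ^ (m + k - 2))
      (((u : ℝ) * 2 ^ (k - 2) + s' + 1) / 2 ^ (m + k - 2)))
    {z w : ℤ} (hz : |(t : ℝ) * x - z| ≤ (2 : ℝ) ^ (-(k : ℤ)))
    (hw : |(t : ℝ) * y - w| ≤ (2 : ℝ) ^ (-(k : ℤ))) : s' ≤ s + 2 := by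
  rcases Nat.lt_or_ge k 2 with hk | hk
  · -- the truncated `k - 2` is `0`: a single subinterval
    rw [Nat.sub_eq_zero_of_le hk.le, pow_zero] at hs'
    omega
  obtain ⟨n, rfl⟩ := Nat.exists_eq_add_of_le' hk
  rw [Nat.add_sub_cancel, show m + (n + 2) - 2 = m + n by omega, pow_add] at hx hy
  rw [Nat.add_sub_cancel] at hs'
  have hP_low : (2 : ℝ) ^ m / 4 < t := by
    rw [zpow_sub₀ two_ne_zero, zpow_natCast] at htlow
    linarith
  have hP_high : (t : ℝ) ≤ 2 ^ m / 2 := by rwa [zpow_sub_one₀ two_ne_zero, zpow_natCast] at hthigh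
  have hε : (2 : ℝ) ^ (-((n + 2 : ℕ) : ℤ)) ≤ 1 / (4 * 2 ^ n) := by
    rw [zpow_neg, zpow_natCast, pow_add, one_div]; norm_num [mul_comm]
  have : s' < s + 3 := by
    exact_mod_cast dyadic_index_lt_add_three_of_near_int hP_low hP_high hε (Nat.cast_nonneg s)
      (by exact_mod_cast hs') hx hy hz hw
  omega

theorem at_most_three_bad_subintervals_general (k : ℕ) (t : ℕ)
    (m : ℕ) (htlow : (2 : ℝ) ^ ((m : ℤ) - 2) < t) (hthigh : (t : ℝ) ≤ 2 ^ ((m : ℤ) - 1))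
    (u : ℤ) :
    {s : ℕ | s < 2 ^ (k - 2) ∧ ∃ x : ℝ,
        x ∈ Set.Icc (((u : ℝ) * 2 ^ (k - 2) + s) / 2 ^ (m + k - 2))
                    (((u : ℝ) * 2 ^ (k - 2) + s + 1) / 2 ^ (m + k - 2)) ∧
        ∃ z : ℤ, |(t : ℝ) * x - z| ≤ (2 : ℝ) ^ (-(k : ℤ))}.ncard ≤ 3 :=
  Set.ncard_le_add_one_of_forall_le_add fun _ ⟨_, _, hx, _, hz⟩ _ ⟨hs', _, hy, _, hw⟩ ↦
    bad_index_le_add_two htlow hthigh hs' hx hy hz hw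

/-- **At most 3 bad subintervals (Lemma on stripes).** Fix `k ≥ 3`, `ε = 2^{-k}`, and a
positive integer `t` with `2^{m-2} < t ≤ 2^{m-1}`. Inside any dyadic interval
`[u/2^m, (u+1)/2^m]`, at most `3` of its `2^{k-2}` dyadic subintervals of level
`m + k - 2` contain a point `x` with `d(tx, ℤ) ≤ 2^{-k}`. -/
theorem at_most_three_bad_subintervals (k : ℕ) (hk : 3 ≤ k) (t : ℕ) (ht : 0 < t)
    (m : ℕ) (htlow : (2 : ℝ) ^ ((m : ℤ) - 2) < t) (hthigh : (t : ℝ) ≤ 2 ^ ((m : ℤ) - 1))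
    (u : ℤ) :
    {s : ℕ | s < 2 ^ (k - 2) ∧ ∃ x : ℝ,
        x ∈ Set.Icc (((u : ℝ) * 2 ^ (k - 2) + s) / 2 ^ (m + k - 2))
                    (((u : ℝ) * 2 ^ (k - 2) + s + 1) / 2 ^ (m + k - 2)) ∧
        ∃ z : ℤ, |(t : ℝ) * x - z| ≤ (2 : ℝ) ^ (-(k : ℤ))}.ncard ≤ 3 :=
  at_most_three_bad_subintervals_general k t m htlow hthigh u
end
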